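/- arXiv:2010.12182 — 11 statements merged into one kernel-verified Lean document; each statement's English description precedes it below -/
import Mathlib

section
/- Let Γ ≤ G₁ × G₂ × G₃ be a 2-injective 3-factor subdirect product of finite groups. Then for every i ∈ {1,2,3}, the index [Gᵢ : πᵢ(H)] equals the index [Γ : H]. -/
/-- `Γ ≤ G₁ × G₂ × G₃` is a (3-factor) subdirect product:
the projection to each factor is surjective on `Γ`. -/
def IsSubdirect3 {G₁ G₂ G₃ : Type*} [Group G₁] [Group G₂] [Group G₃]
    (Γ : Subgroup (G₁ × G₂ × G₃)) : Prop :=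
  (∀ x : G₁, ∃ g ∈ Γ, g.1 = x) ∧ (∀ x : G₂, ∃ g ∈ Γ, g.2.1 = x) ∧
    (∀ x : G₃, ∃ g ∈ Γ, g.2.2 = x)

/-- `Γ ≤ G₁ × G₂ × G₃` is 2-injective: for each `i`, the projection of `Γ` onto
the product of the two factors other than `Gᵢ` is injective on `Γ`. -/
def IsTwoInjective3 {G₁ G₂ G₃ : Type*} [Group G₁] [Group G₂] [Group G₃]
    (Γ : Subgroup (G₁ × G₂ × G₃)) : Prop :=
  (∀ g ∈ Γ, ∀ h ∈ Γ, g.2.1 = h.2.1 → g.2.2 = h.2.2 → g = h) ∧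
  (∀ g ∈ Γ, ∀ h ∈ Γ, g.1 = h.1 → g.2.2 = h.2.2 → g = h) ∧
  (∀ g ∈ Γ, ∀ h ∈ Γ, g.1 = h.1 → g.2.1 = h.2.1 → g = h)

/-- Since `π` is injective on `Γ` modulo `H`, it identifies `Γ ⧸ H` with `π(Γ) ⧸ π(H)`. -/
theorem Subgroup.index_map_eq_relIndex_of_inf_ker_le {G K : Type*} [Group G] [Group K]
    {Γ H : Subgroup G} {π : G →* K} (hHΓ : H ≤ Γ) (hker : Γ ⊓ π.ker ≤ H)
    (hsurj : ∀ x, ∃ g ∈ Γ, π g = x) :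
    (H.map π).index = H.relIndex Γ := by
  have hsurj' : Function.Surjective (π.comp Γ.subtype) := fun x ↦
    let ⟨g, hg, hgx⟩ := hsurj x
    ⟨⟨g, hg⟩, hgx⟩
  have hmap : (H.subgroupOf Γ).map (π.comp Γ.subtype) = H.map π := by
    rw [← Subgroup.map_map, Subgroup.subgroupOf_map_subtype, inf_of_le_left hHΓ]
  rw [← hmap, Subgroup.index_map_eq _ hsurj' fun γ hγ ↦ hker ⟨γ.2, hγ⟩, Subgroup.relIndex]

theorem statement_1_general {G₁ G₂ G₃ : Type*} [Group G₁] [Group G₂] [Group G₃]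
    (Γ : Subgroup (G₁ × G₂ × G₃))
    (hsd : IsSubdirect3 Γ) :
    let π₁ : (G₁ × G₂ × G₃) →* G₁ := MonoidHom.fst G₁ (G₂ × G₃)
    let π₂ : (G₁ × G₂ × G₃) →* G₂ :=
      (MonoidHom.fst G₂ G₃).comp (MonoidHom.snd G₁ (G₂ × G₃))
    let π₃ : (G₁ × G₂ × G₃) →* G₃ :=
      (MonoidHom.snd G₂ G₃).comp (MonoidHom.snd G₁ (G₂ × G₃))
    let H : Subgroup (G₁ × G₂ × G₃) :=
      (Γ ⊓ π₁.ker) ⊔ (Γ ⊓ π₂.ker) ⊔ (Γ ⊓ π₃.ker)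
    (H.map π₁).index = H.relIndex Γ ∧
    (H.map π₂).index = H.relIndex Γ ∧
    (H.map π₃).index = H.relIndex Γ := by
  intro π₁ π₂ π₃ H
  have hHΓ : H ≤ Γ := sup_le (sup_le inf_le_left inf_le_left) inf_le_left
  exact ⟨Subgroup.index_map_eq_relIndex_of_inf_ker_le hHΓ (le_sup_of_le_left le_sup_left) hsd.1,
    Subgroup.index_map_eq_relIndex_of_inf_ker_le hHΓ (le_sup_of_le_left le_sup_right) hsd.2.1,
    Subgroup.index_map_eq_relIndex_of_inf_ker_le hHΓ le_sup_right hsd.2.2⟩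

theorem statement_1 {G₁ G₂ G₃ : Type*} [Group G₁] [Group G₂] [Group G₃]
    [Finite G₁] [Finite G₂] [Finite G₃]
    (Γ : Subgroup (G₁ × G₂ × G₃))
    (hsd : IsSubdirect3 Γ) (h2inj : IsTwoInjective3 Γ) :
    let π₁ : (G₁ × G₂ × G₃) →* G₁ := MonoidHom.fst G₁ (G₂ × G₃)
    let π₂ : (G₁ × G₂ × G₃) →* G₂ :=
      (MonoidHom.fst G₂ G₃).comp (MonoidHom.snd G₁ (G₂ × G₃))
    let π₃ : (G₁ × G₂ × G₃) →* G₃ :=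
      (MonoidHom.snd G₂ G₃).comp (MonoidHom.snd G₁ (G₂ × G₃))
    let H : Subgroup (G₁ × G₂ × G₃) :=
      (Γ ⊓ π₁.ker) ⊔ (Γ ⊓ π₂.ker) ⊔ (Γ ⊓ π₃.ker)
    (H.map π₁).index = H.relIndex Γ ∧
    (H.map π₂).index = H.relIndex Γ ∧
    (H.map π₃).index = H.relIndex Γ :=
  statement_1_general Γ hsd
end

section
/- Let Γ ≤ D_{n₁} × D_{n₂} × D_{n₃} be a 2-injective 3-factor subdirect product with nᵢ ∉ {1,2} (i.e., nᵢ ≥ 3) for all i ∈ {1,2,3}. If Γ contains an element whose first component is a reflection and whose second and third components are rotations, then Γ contains an element whose first component is a rotation and whose second and third components are reflections. -/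
open DihedralGroup in
/-- An element of `Dₙ` is a rotation if it lies in the cyclic subgroup of
rotations `{r i}`; the identity counts as a rotation. -/
def IsRotation {n : ℕ} (x : DihedralGroup n) : Prop := ∃ i, x = r i

open DihedralGroup in
/-- An element of `Dₙ` is a reflection if it is of the form `sr i`. -/
def IsReflection {n : ℕ} (x : DihedralGroup n) : Prop := ∃ i, x = sr i

/-- A subgroup of a product of three dihedral groups is a rotate-or-reflect group if every
element is either a rotation in all components or a reflection in all components. -/
def IsRotateOrReflect3 {n₁ n₂ n₃ : ℕ}
    (Γ : Subgroup (DihedralGroup n₁ × DihedralGroup n₂ × DihedralGroup n₃)) : Prop :=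
  ∀ g ∈ Γ, (IsRotation g.1 ∧ IsRotation g.2.1 ∧ IsRotation g.2.2) ∨
    (IsReflection g.1 ∧ IsReflection g.2.1 ∧ IsReflection g.2.2)

/-- A subgroup of a product of two dihedral groups is a rotate-or-reflect group if every
element is either a rotation in both components or a reflection in both components. -/
def IsRotateOrReflect2 {n₁ n₂ : ℕ}
    (Γ : Subgroup (DihedralGroup n₁ × DihedralGroup n₂)) : Prop :=
  ∀ g ∈ Γ, (IsRotation g.1 ∧ IsRotation g.2) ∨ (IsReflection g.1 ∧ IsReflection g.2)


open DihedralGroup in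
lemma rot_or_refl' {n : ℕ} (x : DihedralGroup n) : IsRotation x ∨ IsReflection x := by
  cases x with
  | r i => exact Or.inl ⟨i, rfl⟩
  | sr i => exact Or.inr ⟨i, rfl⟩

open DihedralGroup in
lemma rot_mul_refl' {n : ℕ} {x y : DihedralGroup n} (hx : IsRotation x)
    (hy : IsReflection y) : IsReflection (x * y) := by
  obtain ⟨i, rfl⟩ := hx; obtain ⟨j, rfl⟩ := hy; exact ⟨j - i, r_mul_sr i j⟩

open DihedralGroup in
lemma refl_mul_rot' {n : ℕ} {x y : DihedralGroup n} (hx : IsReflection x)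
    (hy : IsRotation y) : IsReflection (x * y) := by
  obtain ⟨i, rfl⟩ := hx; obtain ⟨j, rfl⟩ := hy; exact ⟨i + j, sr_mul_r i j⟩

open DihedralGroup in
lemma refl_mul_refl' {n : ℕ} {x y : DihedralGroup n} (hx : IsReflection x)
    (hy : IsReflection y) : IsRotation (x * y) := by
  obtain ⟨i, rfl⟩ := hx; obtain ⟨j, rfl⟩ := hy; exact ⟨j - i, sr_mul_sr i j⟩

theorem statement_2 {n₁ n₂ n₃ : ℕ} (h₁ : 3 ≤ n₁) (h₂ : 3 ≤ n₂) (h₃ : 3 ≤ n₃)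
    (Γ : Subgroup (DihedralGroup n₁ × DihedralGroup n₂ × DihedralGroup n₃))
    (hsd : IsSubdirect3 Γ) (h2inj : IsTwoInjective3 Γ)
    (g : DihedralGroup n₁ × DihedralGroup n₂ × DihedralGroup n₃) (hg : g ∈ Γ)
    (hrefl : IsReflection g.1) (hrot₂ : IsRotation g.2.1) (hrot₃ : IsRotation g.2.2) :
    ∃ h ∈ Γ, IsRotation h.1 ∧ IsReflection h.2.1 ∧ IsReflection h.2.2 := by
  obtain ⟨p, hp, hp21⟩ := hsd.2.1 (DihedralGroup.sr 0)
  obtain ⟨q, hq, hq22⟩ := hsd.2.2 (DihedralGroup.sr 0)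
  have hp2 : IsReflection p.2.1 := ⟨0, hp21⟩
  have hq3 : IsReflection q.2.2 := ⟨0, hq22⟩
  rcases rot_or_refl' p.2.2 with pb | pb
  · rcases rot_or_refl' q.2.1 with qd | qd
    · rcases rot_or_refl' (p.1 * q.1) with pa | pa
      · exact ⟨p * q, mul_mem hp hq, pa, refl_mul_rot' hp2 qd, rot_mul_refl' pb hq3⟩
      · exact ⟨g * (p * q), mul_mem hg (mul_mem hp hq), refl_mul_refl' hrefl pa,
          rot_mul_refl' hrot₂ (refl_mul_rot' hp2 qd),
          rot_mul_refl' hrot₃ (rot_mul_refl' pb hq3)⟩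
    · rcases rot_or_refl' q.1 with qa | qa
      · exact ⟨q, hq, qa, qd, hq3⟩
      · exact ⟨g * q, mul_mem hg hq, refl_mul_refl' hrefl qa, rot_mul_refl' hrot₂ qd,
          rot_mul_refl' hrot₃ hq3⟩
  · rcases rot_or_refl' p.1 with pa | pa
    · exact ⟨p, hp, pa, hp2, pb⟩
    · exact ⟨g * p, mul_mem hg hp, refl_mul_refl' hrefl pa, rot_mul_refl' hrot₂ hp2,
        rot_mul_refl' hrot₃ pb⟩
end

section
/- Let Γ ≤ D_{n₁} × D_{n₂} × D_{n₃} be a 2-injective 3-factor subdirect product with nᵢ ∉ {1,2} for all i ∈ {1,2,3}. If for every i ∈ {1,2,3} the kernel Hᵢ contains no element whose two components other than the i-th are both reflections, then Γ is a rotate-or-reflect group. -/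
/-!
Compose each projection of `Γ` with the sign `Dₙ → ℤˣ`; the claim is that the three signs
agree. On the kernel of one projection the other two are injective and preserve being an
involution and being central, so a reflection there cannot face a rotation; with the
hypothesis on `Hᵢ`, the kernel is made of rotations. Pick `h ∈ Γ` whose `i`-th component is
`r 1`. Its other two components are not both reflections, and translating by powers of `h` shows
that a rotation in the `i`-th factor forces a rotation in a factor where `h` has one; as both
signs are onto `ℤˣ`, they coincide. Every sign agreeing with another one, all three agree.
-/

namespace DihedralGroup

variable {n : ℕ}

def sign : DihedralGroup n →* ℤˣ where
  toFun
    | r _ => 1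
    | sr _ => -1
  map_one' := rfl
  map_mul' := by rintro (i | i) (j | j) <;> simp [r_mul_r, r_mul_sr, sr_mul_r, sr_mul_sr]

@[simp] lemma sign_r (i : ZMod n) : sign (r i) = 1 := rfl

@[simp] lemma sign_sr (i : ZMod n) : sign (sr i) = -1 := rfl

lemma isRotation_iff_sign_eq_one {x : DihedralGroup n} : IsRotation x ↔ sign x = 1 := by
  cases x <;> simp [IsRotation]

lemma isReflection_iff_sign_ne_one {x : DihedralGroup n} : IsReflection x ↔ sign x ≠ 1 := by
  cases x <;> simp [IsReflection]

lemma r_one_sq_ne_one (hn : 3 ≤ n) : (r 1 : DihedralGroup n) ^ 2 ≠ 1 :=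
  pow_ne_one_of_lt_orderOf two_ne_zero (by rw [orderOf_r_one]; omega)

lemma not_commute_sr_r_one (hn : 3 ≤ n) (i : ZMod n) : ¬Commute (sr i) (r 1) := by
  intro h
  have h' : i + 1 = i - 1 := by simpa [Commute, SemiconjBy, sr_mul_r, r_mul_sr] using h
  apply r_one_sq_ne_one hn
  rw [r_one_pow, one_def]
  congr 1
  linear_combination h'

lemma commute_r_of_sq_eq_one {i : ZMod n} (h : r i ^ 2 = 1) (y : DihedralGroup n) :
    Commute (r i) y := by
  have hi : i * 2 = 0 := by
    rw [r_pow, one_def] at h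
    exact_mod_cast r.inj h
  cases y with
  | r j => simp only [Commute, SemiconjBy, r_mul_r, add_comm]
  | sr j =>
    simp only [Commute, SemiconjBy, r_mul_sr, sr_mul_r, sr.injEq]
    linear_combination -hi

end DihedralGroup

open DihedralGroup

section Kernels

variable {G A C : Type*} [Group G] [Group A] [Group C]

lemma eq_of_map_eq_of_disjoint_ker {φ : G →* A} {χ : G →* C} (hd : Disjoint φ.ker χ.ker)
    {x y : G} (hφ : φ x = φ y) (hχ : χ x = χ y) : x = y := by
  have hxy : x * y⁻¹ ∈ φ.ker ⊓ χ.ker := by simp [hφ, hχ]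
  rw [hd.eq_bot, Subgroup.mem_bot] at hxy
  exact mul_inv_eq_one.1 hxy

lemma MonoidHom.eq_of_ker_le_of_exists_eq_neg_one {e f : G →* ℤˣ} (hle : e.ker ≤ f.ker)
    (hf : ∃ δ, f δ = -1) : e = f := by
  obtain ⟨δ, hδ⟩ := hf
  have heδ : e δ = -1 := by
    rcases Int.units_eq_one_or (e δ) with h | h
    · exact absurd (hle h) (by simp [MonoidHom.mem_ker, hδ])
    · exact h
  refine MonoidHom.ext fun γ => ?_
  rcases Int.units_eq_one_or (e γ) with h | h
  · rw [h, hle h]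
  · have : f (γ * δ) = 1 := hle (by simp [h, heδ])
    rw [map_mul, hδ, mul_neg_one, neg_eq_iff_eq_neg] at this
    rw [h, this]

end Kernels

section DihedralFactors

variable {G C : Type*} [Group G] [Group C] {a b c : ℕ}
  {φ : G →* DihedralGroup a} {ψ : G →* DihedralGroup b}

lemma isReflection_of_isReflection_of_map_eq_one {χ : G →* C} (hb : 3 ≤ b)
    (hψ : Function.Surjective ψ) (hφχ : Disjoint φ.ker χ.ker) (hψχ : Disjoint ψ.ker χ.ker)
    {γ : G} (hγ : χ γ = 1) (hrefl : IsReflection (ψ γ)) : IsReflection (φ γ) := by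
  obtain ⟨j, hj⟩ := hrefl
  have hsq : γ ^ 2 = 1 :=
    eq_of_map_eq_of_disjoint_ker hψχ (by simp [hj, sq]) (by simp [hγ])
  rcases hφγ : φ γ with i | i
  · obtain ⟨q, hq⟩ := hψ (r 1)
    have hcentral : r i ^ 2 = 1 := by rw [← hφγ, ← map_pow, hsq, map_one]
    have hcomm : γ * q = q * γ := by
      refine eq_of_map_eq_of_disjoint_ker hφχ ?_ (by simp [hγ])
      simpa [hφγ] using (commute_r_of_sq_eq_one hcentral (φ q)).eq
    have := congrArg ψ hcomm
    simp only [map_mul, hj, hq] at this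
    exact absurd this (not_commute_sr_r_one hb j)
  · exact ⟨i, rfl⟩

lemma ker_le_ker_sign_comp {χ : G →* C} (ha : 3 ≤ a) (hφ : Function.Surjective φ)
    (hφχ : Disjoint φ.ker χ.ker) (hψχ : Disjoint ψ.ker χ.ker)
    (hk : ∀ γ, χ γ = 1 → ¬(IsReflection (φ γ) ∧ IsReflection (ψ γ))) :
    χ.ker ≤ (sign.comp φ).ker := by
  intro γ hγ
  rw [MonoidHom.mem_ker] at hγ ⊢
  by_contra hne
  have hφγ : IsReflection (φ γ) := isReflection_iff_sign_ne_one.2 hne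
  exact hk γ hγ ⟨hφγ, isReflection_of_isReflection_of_map_eq_one ha hφ hψχ hφχ hγ hφγ⟩

lemma ker_sign_comp_le_of_map_eq_r_one {M : Type*} [Group M] [NeZero c] {e : G →* M}
    {χ : G →* DihedralGroup c} (hker : χ.ker ≤ e.ker) {h : G} (hχh : χ h = r 1) (heh : e h = 1) :
    (sign.comp χ).ker ≤ e.ker := by
  intro γ hγ
  obtain ⟨k, hk⟩ := isRotation_iff_sign_eq_one.2 hγ
  have : γ * (h ^ k.val)⁻¹ ∈ χ.ker := by
    simp [MonoidHom.mem_ker, hk, hχh]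
  simpa [MonoidHom.mem_ker, heh] using hker this

lemma exists_sign_comp_eq_neg_one (hφ : Function.Surjective φ) : ∃ δ, sign.comp φ δ = -1 := by
  obtain ⟨δ, hδ⟩ := hφ (sr 0)
  exact ⟨δ, by simp [hδ]⟩

lemma sign_comp_eq_or_sign_comp_eq {χ : G →* DihedralGroup c} (ha : 3 ≤ a) (hb : 3 ≤ b)
    (hc : 3 ≤ c) (hφ : Function.Surjective φ) (hψ : Function.Surjective ψ)
    (hχ : Function.Surjective χ) (hφψ : Disjoint φ.ker ψ.ker) (hφχ : Disjoint φ.ker χ.ker)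
    (hψχ : Disjoint ψ.ker χ.ker)
    (hk : ∀ γ, χ γ = 1 → ¬(IsReflection (φ γ) ∧ IsReflection (ψ γ))) :
    sign.comp χ = sign.comp φ ∨ sign.comp χ = sign.comp ψ := by
  have : NeZero c := ⟨by omega⟩
  obtain ⟨h, hh⟩ := hχ (r 1)
  -- otherwise `h ^ 2 = 1` by 2-injectivity, while `χ (h ^ 2) = r 2 ≠ 1`
  have hrot : sign (φ h) = 1 ∨ sign (ψ h) = 1 := by
    by_contra! hne
    obtain ⟨i, hi⟩ := isReflection_iff_sign_ne_one.2 hne.1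
    obtain ⟨j, hj⟩ := isReflection_iff_sign_ne_one.2 hne.2
    have hsq : h ^ 2 = 1 :=
      eq_of_map_eq_of_disjoint_ker hφψ (by simp [hi, sq]) (by simp [hj, sq])
    apply r_one_sq_ne_one hc
    rw [← hh, ← map_pow, hsq, map_one]
  rcases hrot with hφh | hψh
  · left
    exact MonoidHom.eq_of_ker_le_of_exists_eq_neg_one
      (ker_sign_comp_le_of_map_eq_r_one (ker_le_ker_sign_comp ha hφ hφχ hψχ hk) hh hφh)
      (exists_sign_comp_eq_neg_one hφ)
  · right
    exact MonoidHom.eq_of_ker_le_of_exists_eq_neg_one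
      (ker_sign_comp_le_of_map_eq_r_one
        (ker_le_ker_sign_comp hb hψ hψχ hφχ fun γ hγ hrefl => hk γ hγ hrefl.symm) hh hψh)
      (exists_sign_comp_eq_neg_one hψ)

end DihedralFactors

section Projections

variable {G₁ G₂ G₃ : Type*} [Group G₁] [Group G₂] [Group G₃] (Γ : Subgroup (G₁ × G₂ × G₃))

def Subgroup.proj₁ : Γ →* G₁ := (MonoidHom.fst _ _).comp Γ.subtype

def Subgroup.proj₂ : Γ →* G₂ := (MonoidHom.fst _ _).comp ((MonoidHom.snd _ _).comp Γ.subtype)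

def Subgroup.proj₃ : Γ →* G₃ := (MonoidHom.snd _ _).comp ((MonoidHom.snd _ _).comp Γ.subtype)

variable {Γ}

lemma IsSubdirect3.surjective_proj (hsd : IsSubdirect3 Γ) :
    Function.Surjective Γ.proj₁ ∧ Function.Surjective Γ.proj₂ ∧ Function.Surjective Γ.proj₃ := by
  obtain ⟨hs₁, hs₂, hs₃⟩ := hsd
  refine ⟨fun x => ?_, fun x => ?_, fun x => ?_⟩
  · obtain ⟨g, hg, rfl⟩ := hs₁ x
    exact ⟨⟨g, hg⟩, rfl⟩
  · obtain ⟨g, hg, rfl⟩ := hs₂ x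
    exact ⟨⟨g, hg⟩, rfl⟩
  · obtain ⟨g, hg, rfl⟩ := hs₃ x
    exact ⟨⟨g, hg⟩, rfl⟩

lemma IsTwoInjective3.disjoint_ker (hinj : IsTwoInjective3 Γ) :
    Disjoint Γ.proj₂.ker Γ.proj₃.ker ∧ Disjoint Γ.proj₁.ker Γ.proj₃.ker ∧
      Disjoint Γ.proj₁.ker Γ.proj₂.ker := by
  obtain ⟨hi₁, hi₂, hi₃⟩ := hinj
  refine ⟨?_, ?_, ?_⟩ <;> refine Subgroup.disjoint_def.2 fun {g} hg hg' => Subtype.ext ?_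
  · exact hi₁ g g.2 1 Γ.one_mem hg hg'
  · exact hi₂ g g.2 1 Γ.one_mem hg hg'
  · exact hi₃ g g.2 1 Γ.one_mem hg hg'

end Projections

theorem statement_3 {n₁ n₂ n₃ : ℕ} (h₁ : 3 ≤ n₁) (h₂ : 3 ≤ n₂) (h₃ : 3 ≤ n₃)
    (Γ : Subgroup (DihedralGroup n₁ × DihedralGroup n₂ × DihedralGroup n₃))
    (hsd : IsSubdirect3 Γ) (h2inj : IsTwoInjective3 Γ)
    (hk₁ : ∀ g ∈ Γ, g.1 = 1 → ¬(IsReflection g.2.1 ∧ IsReflection g.2.2))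
    (hk₂ : ∀ g ∈ Γ, g.2.1 = 1 → ¬(IsReflection g.1 ∧ IsReflection g.2.2))
    (hk₃ : ∀ g ∈ Γ, g.2.2 = 1 → ¬(IsReflection g.1 ∧ IsReflection g.2.1)) :
    IsRotateOrReflect3 Γ := by
  obtain ⟨s₁, s₂, s₃⟩ := hsd.surjective_proj
  obtain ⟨d₂₃, d₁₃, d₁₂⟩ := h2inj.disjoint_ker
  have e₁ := sign_comp_eq_or_sign_comp_eq h₂ h₃ h₁ s₂ s₃ s₁ d₂₃ d₁₂.symm d₁₃.symm
    fun γ => hk₁ γ γ.2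
  have e₂ := sign_comp_eq_or_sign_comp_eq h₁ h₃ h₂ s₁ s₃ s₂ d₁₃ d₁₂ d₂₃.symm
    fun γ => hk₂ γ γ.2
  have e₃ := sign_comp_eq_or_sign_comp_eq h₁ h₂ h₃ s₁ s₂ s₃ d₁₂ d₁₃ d₂₃ fun γ => hk₃ γ γ.2
  have heq : sign.comp Γ.proj₁ = sign.comp Γ.proj₂ ∧ sign.comp Γ.proj₂ = sign.comp Γ.proj₃ := by
    grind
  intro g hg
  have h₁₂ : sign g.1 = sign g.2.1 := DFunLike.congr_fun heq.1 ⟨g, hg⟩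
  have h₂₃ : sign g.2.1 = sign g.2.2 := DFunLike.congr_fun heq.2 ⟨g, hg⟩
  simp only [isRotation_iff_sign_eq_one, isReflection_iff_sign_ne_one, h₁₂, h₂₃, and_self]
  exact em _
end

section
/- Let Γ ≤ D_{n₁} × D_{n₂} × D_{n₃} be a 2-injective 3-factor subdirect product such that n_j > 2 for all j ∈ {1,2,3} and nᵢ ∉ {1,2,4} for some i ∈ {1,2,3}. Then every element of the kernel Hᵢ is a rotation, i.e., all its components are rotations. -/
/-!
Let `g ∈ Γ` have trivial first coordinate and suppose `g.2.1 = sr α` is a reflection. If `g.2.2` is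
a rotation, it has order at most two (2-injectivity applied to `g²`), hence is central, so for
`γ ∈ Γ` with `γ.2.1 = r 1` the commutator `⁅γ, g⁆ = (1, r 2, 1)` lies in `Γ`, so 2-injectivity
makes it trivial, i.e. `n₂ ∣ 2`.
If `g.2.2 = sr β` is a reflection, then for every `ε ∈ Γ` with `ε.2.1 = 1` the commutator
`⁅ε, g⁆ = (1, 1, ⁅ε.2.2, sr β⁆)` is trivial, so `ε.2.2` commutes with a reflection, `ε.2.2² = 1`,
and then `ε.1² = 1`. Such an `ε` exists with `ε.1 = r 2`, which forces `n₁ ∣ 4`.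
The remaining coordinates and kernels follow by permuting the factors.
-/

open DihedralGroup
open scoped commutatorElement

namespace DihedralGroup

variable {n : ℕ}

theorem commutatorElement_r_sr (i j : ZMod n) : ⁅r i, sr j⁆ = r i * r i := by
  simp only [commutatorElement_def, r_mul_sr, inv_r, sr_mul_r, inv_sr, sr_mul_sr, r_mul_r]
  ring_nf

theorem mul_self_eq_one_of_commute_sr {x : DihedralGroup n} {j : ZMod n}
    (h : Commute x (sr j)) : x * x = 1 := by
  cases x with
  | r i => rwa [← commutatorElement_r_sr i j, commutatorElement_eq_one_iff_commute]
  | sr i => exact sr_mul_self i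

theorem commute_r_of_mul_self_eq_one {i : ZMod n} (h : r i * r i = 1) (x : DihedralGroup n) :
    Commute x (r i) := by
  rw [r_mul_r, ← r_zero, r.injEq] at h
  cases x with
  | r j => simp only [Commute, SemiconjBy, r_mul_r, add_comm]
  | sr j =>
    simp only [Commute, SemiconjBy, sr_mul_r, r_mul_sr, sr.injEq]
    linear_combination h

theorem r_natCast_ne_one {d : ℕ} (hd : ¬ n ∣ d) : r (d : ZMod n) ≠ 1 := by
  rw [← r_zero, Ne, r.injEq]
  exact mt (ZMod.natCast_eq_zero_iff d n).mp hd

theorem isRotation_or_isReflection (x : DihedralGroup n) : IsRotation x ∨ IsReflection x := by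
  cases x with
  | r i => exact .inl ⟨i, rfl⟩
  | sr i => exact .inr ⟨i, rfl⟩

end DihedralGroup

theorem Prod.fst_commutatorElement {G H : Type*} [Group G] [Group H] (a b : G × H) :
    ⁅a, b⁆.1 = ⁅a.1, b.1⁆ :=
  rfl

theorem Prod.snd_commutatorElement {G H : Type*} [Group G] [Group H] (a b : G × H) :
    ⁅a, b⁆.2 = ⁅a.2, b.2⁆ :=
  rfl

theorem Subgroup.commutatorElement_mem {G : Type*} [Group G] (H : Subgroup G) {x y : G}
    (hx : x ∈ H) (hy : y ∈ H) : ⁅x, y⁆ ∈ H := by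
  rw [commutatorElement_def]
  exact H.mul_mem (H.mul_mem (H.mul_mem hx hy) (H.inv_mem hx)) (H.inv_mem hy)

section ThreeFactors

variable {G₁ G₂ G₃ : Type*} [Group G₁] [Group G₂] [Group G₃] {Γ : Subgroup (G₁ × G₂ × G₃)}
  {g : G₁ × G₂ × G₃}

namespace IsTwoInjective3

theorem fst_eq_one (hΓ : IsTwoInjective3 Γ) (hg : g ∈ Γ) (h₂ : g.2.1 = 1) (h₃ : g.2.2 = 1) :
    g.1 = 1 := by
  rw [hΓ.1 g hg 1 Γ.one_mem h₂ h₃]; rfl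

theorem snd_fst_eq_one (hΓ : IsTwoInjective3 Γ) (hg : g ∈ Γ) (h₁ : g.1 = 1) (h₃ : g.2.2 = 1) :
    g.2.1 = 1 := by
  rw [hΓ.2.1 g hg 1 Γ.one_mem h₁ h₃]; rfl

theorem snd_snd_eq_one (hΓ : IsTwoInjective3 Γ) (hg : g ∈ Γ) (h₁ : g.1 = 1) (h₂ : g.2.1 = 1) :
    g.2.2 = 1 := by
  rw [hΓ.2.2 g hg 1 Γ.one_mem h₁ h₂]; rfl

end IsTwoInjective3

variable (Γ) in
def Subgroup.swap12 : Subgroup (G₂ × G₁ × G₃) :=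
  Γ.comap (((MonoidHom.fst _ _).comp (MonoidHom.snd _ _)).prod
    ((MonoidHom.fst _ _).prod ((MonoidHom.snd _ _).comp (MonoidHom.snd _ _))))

variable (Γ) in
def Subgroup.swap23 : Subgroup (G₁ × G₃ × G₂) :=
  Γ.comap ((MonoidHom.id G₁).prodMap (MulEquiv.prodComm : G₃ × G₂ ≃* G₂ × G₃).toMonoidHom)

theorem Subgroup.mem_swap12 {x : G₂ × G₁ × G₃} : x ∈ Γ.swap12 ↔ (x.2.1, x.1, x.2.2) ∈ Γ :=
  Iff.rfl

theorem Subgroup.mem_swap23 {x : G₁ × G₃ × G₂} : x ∈ Γ.swap23 ↔ (x.1, x.2.2, x.2.1) ∈ Γ :=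
  Iff.rfl

theorem IsSubdirect3.swap12 (h : IsSubdirect3 Γ) : IsSubdirect3 Γ.swap12 := by
  obtain ⟨h₁, h₂, h₃⟩ := h
  refine ⟨fun x => ?_, fun x => ?_, fun x => ?_⟩
  · obtain ⟨g, hg, rfl⟩ := h₂ x; exact ⟨(g.2.1, g.1, g.2.2), Subgroup.mem_swap12.2 hg, rfl⟩
  · obtain ⟨g, hg, rfl⟩ := h₁ x; exact ⟨(g.2.1, g.1, g.2.2), Subgroup.mem_swap12.2 hg, rfl⟩
  · obtain ⟨g, hg, rfl⟩ := h₃ x; exact ⟨(g.2.1, g.1, g.2.2), Subgroup.mem_swap12.2 hg, rfl⟩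

theorem IsSubdirect3.swap23 (h : IsSubdirect3 Γ) : IsSubdirect3 Γ.swap23 := by
  obtain ⟨h₁, h₂, h₃⟩ := h
  refine ⟨fun x => ?_, fun x => ?_, fun x => ?_⟩
  · obtain ⟨g, hg, rfl⟩ := h₁ x; exact ⟨(g.1, g.2.2, g.2.1), Subgroup.mem_swap23.2 hg, rfl⟩
  · obtain ⟨g, hg, rfl⟩ := h₃ x; exact ⟨(g.1, g.2.2, g.2.1), Subgroup.mem_swap23.2 hg, rfl⟩
  · obtain ⟨g, hg, rfl⟩ := h₂ x; exact ⟨(g.1, g.2.2, g.2.1), Subgroup.mem_swap23.2 hg, rfl⟩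

theorem IsTwoInjective3.swap12 (h : IsTwoInjective3 Γ) : IsTwoInjective3 Γ.swap12 := by
  obtain ⟨h₁, h₂, h₃⟩ := h
  refine ⟨fun g hg g' hg' e₁ e₂ => ?_, fun g hg g' hg' e₁ e₂ => ?_, fun g hg g' hg' e₁ e₂ => ?_⟩
  · simpa [Prod.ext_iff, and_left_comm] using h₂ _ hg _ hg' e₁ e₂
  · simpa [Prod.ext_iff, and_left_comm] using h₁ _ hg _ hg' e₁ e₂
  · simpa [Prod.ext_iff, and_left_comm] using h₃ _ hg _ hg' e₂ e₁

theorem IsTwoInjective3.swap23 (h : IsTwoInjective3 Γ) : IsTwoInjective3 Γ.swap23 := by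
  obtain ⟨h₁, h₂, h₃⟩ := h
  refine ⟨fun g hg g' hg' e₁ e₂ => ?_, fun g hg g' hg' e₁ e₂ => ?_, fun g hg g' hg' e₁ e₂ => ?_⟩
  · simpa [Prod.ext_iff, and_comm] using h₁ _ hg _ hg' e₂ e₁
  · simpa [Prod.ext_iff, and_comm] using h₃ _ hg _ hg' e₁ e₂
  · simpa [Prod.ext_iff, and_comm] using h₂ _ hg _ hg' e₁ e₂

end ThreeFactors

section Dihedral

variable {m k l : ℕ} {Γ : Subgroup (DihedralGroup m × DihedralGroup k × DihedralGroup l)}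
  {g : DihedralGroup m × DihedralGroup k × DihedralGroup l}

theorem exists_mem_fst_eq_mul_self_snd_fst_eq_one {α : ZMod k} (hg : g ∈ Γ) (h₁ : g.1 = 1)
    (h₂ : g.2.1 = sr α) {γ : DihedralGroup m × DihedralGroup k × DihedralGroup l} (hγ : γ ∈ Γ) :
    ∃ ε ∈ Γ, ε.1 = γ.1 * γ.1 ∧ ε.2.1 = 1 := by
  obtain ⟨t, ht⟩ | ⟨t, ht⟩ := γ.2.1.isRotation_or_isReflection
  -- `⁅γ, g⁆ = (1, γ.2.1 * γ.2.1, _)` for a rotation `γ.2.1`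
  · refine ⟨γ * γ * ⁅γ, g⁆⁻¹,
      Γ.mul_mem (Γ.mul_mem hγ hγ) (Γ.inv_mem (Γ.commutatorElement_mem hγ hg)), ?_, ?_⟩
    · simp [Prod.fst_commutatorElement, h₁]
    · simp only [Prod.snd_mul, Prod.fst_mul, Prod.snd_inv, Prod.fst_inv,
        Prod.snd_commutatorElement, Prod.fst_commutatorElement, h₂, ht, commutatorElement_r_sr,
        mul_inv_cancel]
  · exact ⟨γ * γ, Γ.mul_mem hγ hγ, rfl, by simp [ht]⟩

theorem IsTwoInjective3.isReflection_snd_snd (hΓ : IsTwoInjective3 Γ) (hk : ¬ k ∣ 2)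
    (hsurj : ∀ x : DihedralGroup k, ∃ γ ∈ Γ, γ.2.1 = x) (hg : g ∈ Γ) (h₁ : g.1 = 1)
    (h₂ : IsReflection g.2.1) : IsReflection g.2.2 := by
  obtain ⟨α, h₂⟩ := h₂
  obtain ⟨δ, h₃⟩ | h₃ := g.2.2.isRotation_or_isReflection
  · exfalso
    have hδ : r δ * r δ = 1 := by
      rw [← h₃]
      exact hΓ.snd_snd_eq_one (Γ.mul_mem hg hg) (by simp [h₁]) (by simp [h₂])
    obtain ⟨γ, hγ, hγ₂⟩ := hsurj (r 1)
    have hcomm : ⁅γ, g⁆.2.1 = 1 := hΓ.snd_fst_eq_one (Γ.commutatorElement_mem hγ hg)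
      (by simp [Prod.fst_commutatorElement, h₁])
      (by simp [Prod.snd_commutatorElement, h₃, commutatorElement_eq_one_iff_commute,
        commute_r_of_mul_self_eq_one hδ])
    rw [Prod.snd_commutatorElement, Prod.fst_commutatorElement, hγ₂, h₂, commutatorElement_r_sr,
      r_mul_r] at hcomm
    exact r_natCast_ne_one hk (by exact_mod_cast hcomm)
  · exact h₃

theorem IsTwoInjective3.not_isReflection_snd_snd (hΓ : IsTwoInjective3 Γ) (hm : ¬ m ∣ 4)
    (hsurj : ∀ x : DihedralGroup m, ∃ γ ∈ Γ, γ.1 = x) (hg : g ∈ Γ) (h₁ : g.1 = 1)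
    (h₂ : IsReflection g.2.1) : ¬ IsReflection g.2.2 := by
  rintro ⟨β, h₃⟩
  obtain ⟨α, h₂⟩ := h₂
  obtain ⟨γ, hγ, hγ₁⟩ := hsurj (r 1)
  obtain ⟨ε, hε, hε₁, hε₂⟩ := exists_mem_fst_eq_mul_self_snd_fst_eq_one hg h₁ h₂ hγ
  have hε₃ : ε.2.2 * ε.2.2 = 1 := by
    refine mul_self_eq_one_of_commute_sr (j := β) (commutatorElement_eq_one_iff_commute.mp ?_)
    rw [← h₃]
    exact hΓ.snd_snd_eq_one (Γ.commutatorElement_mem hε hg)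
      (by simp [Prod.fst_commutatorElement, h₁])
      (by simp [Prod.snd_commutatorElement, Prod.fst_commutatorElement, hε₂])
  have hε₁_sq : ε.1 * ε.1 = 1 := hΓ.fst_eq_one (Γ.mul_mem hε hε) (by simp [hε₂]) hε₃
  rw [hε₁, hγ₁] at hε₁_sq
  simp only [r_mul_r] at hε₁_sq
  exact r_natCast_ne_one hm (by norm_num at hε₁_sq ⊢; exact hε₁_sq)

theorem isRotation_snd_fst_of_fst_eq_one (hm : ¬ m ∣ 4) (hk : ¬ k ∣ 2)
    (hsd : IsSubdirect3 Γ) (hΓ : IsTwoInjective3 Γ) (hg : g ∈ Γ) (h₁ : g.1 = 1) :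
    IsRotation g.2.1 :=
  g.2.1.isRotation_or_isReflection.resolve_right fun h₂ =>
    hΓ.not_isReflection_snd_snd hm hsd.1 hg h₁ h₂ (hΓ.isReflection_snd_snd hk hsd.2.1 hg h₁ h₂)

theorem isRotation_of_fst_eq_one (hm : ¬ m ∣ 4) (hk : ¬ k ∣ 2) (hl : ¬ l ∣ 2)
    (hsd : IsSubdirect3 Γ) (hΓ : IsTwoInjective3 Γ) (hg : g ∈ Γ) (h₁ : g.1 = 1) :
    IsRotation g.1 ∧ IsRotation g.2.1 ∧ IsRotation g.2.2 :=
  ⟨⟨0, h₁⟩, isRotation_snd_fst_of_fst_eq_one hm hk hsd hΓ hg h₁,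
    isRotation_snd_fst_of_fst_eq_one (g := (g.1, g.2.2, g.2.1)) hm hl hsd.swap23 hΓ.swap23
      (Subgroup.mem_swap23.2 hg) h₁⟩

end Dihedral

theorem not_dvd_four_of_notMem {n : ℕ} (hn : n ∉ ({1, 2, 4} : Set ℕ)) : ¬ n ∣ 4 := by
  have : Nat.divisors 4 = {1, 2, 4} := by decide
  exact fun hd => hn (by simpa [this] using Nat.mem_divisors.2 ⟨hd, four_ne_zero⟩)

theorem statement_4 {n₁ n₂ n₃ : ℕ} (h₁ : 2 < n₁) (h₂ : 2 < n₂) (h₃ : 2 < n₃)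
    (Γ : Subgroup (DihedralGroup n₁ × DihedralGroup n₂ × DihedralGroup n₃))
    (hsd : IsSubdirect3 Γ) (h2inj : IsTwoInjective3 Γ) :
    (n₁ ∉ ({1, 2, 4} : Set ℕ) →
      ∀ g ∈ Γ, g.1 = 1 → IsRotation g.1 ∧ IsRotation g.2.1 ∧ IsRotation g.2.2) ∧
    (n₂ ∉ ({1, 2, 4} : Set ℕ) →
      ∀ g ∈ Γ, g.2.1 = 1 → IsRotation g.1 ∧ IsRotation g.2.1 ∧ IsRotation g.2.2) ∧
    (n₃ ∉ ({1, 2, 4} : Set ℕ) →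
      ∀ g ∈ Γ, g.2.2 = 1 → IsRotation g.1 ∧ IsRotation g.2.1 ∧ IsRotation g.2.2) := by
  have not_dvd_two {n : ℕ} (h : 2 < n) : ¬ n ∣ 2 := Nat.not_dvd_of_pos_of_lt two_pos h
  refine ⟨fun hn g hg hg₁ => ?_, fun hn g hg hg₂ => ?_, fun hn g hg hg₃ => ?_⟩
  · exact isRotation_of_fst_eq_one (not_dvd_four_of_notMem hn) (not_dvd_two h₂) (not_dvd_two h₃)
      hsd h2inj hg hg₁
  · obtain ⟨hr₂, hr₁, hr₃⟩ := isRotation_of_fst_eq_one (g := (g.2.1, g.1, g.2.2))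
      (not_dvd_four_of_notMem hn) (not_dvd_two h₁) (not_dvd_two h₃) hsd.swap12 h2inj.swap12 hg hg₂
    exact ⟨hr₁, hr₂, hr₃⟩
  · obtain ⟨hr₃, hr₁, hr₂⟩ := isRotation_of_fst_eq_one (g := (g.2.2, g.1, g.2.1))
      (not_dvd_four_of_notMem hn) (not_dvd_two h₁) (not_dvd_two h₂) hsd.swap23.swap12
      h2inj.swap23.swap12 hg hg₃
    exact ⟨hr₁, hr₂, hr₃⟩
end

section
/- Up to isomorphism there is exactly one 2-injective 3-factor subdirect product of D₄ × D₄ × D₄ that is not a rotate-or-reflect group, namely the double CFI group: every 2-injective 3-factor subdirect product Γ ≤ D₄ × D₄ × D₄ that is not a rotate-or-reflect group is isomorphic (as a group) to the subgroup Δ = ⟨(1,α,α), (α,1,α), (ρ,ρ,β)⟩ of D₄ × D₄ × D₄. -/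
open DihedralGroup in
/-- The double CFI group `Δ = ⟨(1,α,α), (α,1,α), (ρ,ρ,β)⟩ ≤ D₄ × D₄ × D₄`, where
`ρ = r 1` is a rotation of order 4, `α = sr 0` and `α' = sr 2` are the two reflections
with `α * α' = ρ²`, and `β = sr 1 ∉ {α, α'}` is a reflection. -/
def doubleCFI : Subgroup (DihedralGroup 4 × DihedralGroup 4 × DihedralGroup 4) :=
  Subgroup.closure {(1, sr 0, sr 0), (sr 0, 1, sr 0), (r 1, r 1, sr 1)}

/-!
Two-injectivity says that elements of `Γ` agreeing in two coordinates are equal. Hence if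
`g, h ∈ Γ` commute in two coordinates they commute in the third (compare `g h` with `h g`), and if
the square of `g ∈ Γ` is trivial in two coordinates it is trivial.

Cycling the factors, a mixed element of `Γ` may be taken to be `C = (r x, r y, sr z)`: if `Γ`
contains some `(sr i, sr j, r k)`, then the elements of `Γ` with third coordinate `r 1` have exactly
one reflection. These two facts make `x` and `y` odd and give elements `(1, sr p, sr t)` and
`(sr u, 1, sr v)` of `Γ` with `z - t` and `z - v` odd; a product of automorphisms
`r i ↦ r (w i)`, `sr i ↦ sr (w i + k)` of the factors then moves these three elements onto
generators of `Δ`. Finally `Δ` is a maximal 2-injective subgroup: for `g` in a 2-injective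
`Γ ⊇ Δ`, multiplying by an element of `Δ` makes the first coordinate trivial, and commuting with
`(sr 0, 1, sr 0)` and `(1, sr 0, sr 0)` forces the other two into an element of `Δ`.
-/

open DihedralGroup

section TwoInjective

variable {G₁ G₂ G₃ : Type*} [Group G₁] [Group G₂] [Group G₃] {Γ : Subgroup (G₁ × G₂ × G₃)}
  {a a' : G₁} {b b' : G₂} {c c' : G₃}

namespace IsTwoInjective3

theorem fst_mul_self_eq_one (h2 : IsTwoInjective3 Γ) (h : (a, b, c) ∈ Γ) (hb : b * b = 1)
    (hc : c * c = 1) : a * a = 1 :=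
  congrArg Prod.fst (h2.1 _ (Γ.mul_mem h h) _ Γ.one_mem hb hc)

theorem snd_mul_self_eq_one (h2 : IsTwoInjective3 Γ) (h : (a, b, c) ∈ Γ) (ha : a * a = 1)
    (hc : c * c = 1) : b * b = 1 :=
  congrArg (fun g : G₁ × G₂ × G₃ => g.2.1) (h2.2.1 _ (Γ.mul_mem h h) _ Γ.one_mem ha hc)

theorem thd_mul_self_eq_one (h2 : IsTwoInjective3 Γ) (h : (a, b, c) ∈ Γ) (ha : a * a = 1)
    (hb : b * b = 1) : c * c = 1 :=
  congrArg (fun g : G₁ × G₂ × G₃ => g.2.2) (h2.2.2 _ (Γ.mul_mem h h) _ Γ.one_mem ha hb)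

theorem commute_fst (h2 : IsTwoInjective3 Γ) (h : (a, b, c) ∈ Γ) (h' : (a', b', c') ∈ Γ)
    (hb : Commute b b') (hc : Commute c c') : Commute a a' :=
  congrArg Prod.fst (h2.1 _ (Γ.mul_mem h h') _ (Γ.mul_mem h' h) hb hc)

theorem commute_snd (h2 : IsTwoInjective3 Γ) (h : (a, b, c) ∈ Γ) (h' : (a', b', c') ∈ Γ)
    (ha : Commute a a') (hc : Commute c c') : Commute b b' :=
  congrArg (fun g : G₁ × G₂ × G₃ => g.2.1) (h2.2.1 _ (Γ.mul_mem h h') _ (Γ.mul_mem h' h) ha hc)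

theorem commute_thd (h2 : IsTwoInjective3 Γ) (h : (a, b, c) ∈ Γ) (h' : (a', b', c') ∈ Γ)
    (ha : Commute a a') (hb : Commute b b') : Commute c c' :=
  congrArg (fun g : G₁ × G₂ × G₃ => g.2.2) (h2.2.2 _ (Γ.mul_mem h h') _ (Γ.mul_mem h' h) ha hb)

theorem map_prodCongr (h2 : IsTwoInjective3 Γ) {H₁ H₂ H₃ : Type*} [Group H₁] [Group H₂]
    [Group H₃] (e₁ : G₁ ≃* H₁) (e₂ : G₂ ≃* H₂) (e₃ : G₃ ≃* H₃) :
    IsTwoInjective3 (Γ.map (e₁.prodCongr (e₂.prodCongr e₃)).toMonoidHom) := by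
  refine ⟨?_, ?_, ?_⟩ <;> rintro _ ⟨g, hg, rfl⟩ _ ⟨h, hh, rfl⟩ h₁ h₂
  · exact congrArg _ (h2.1 g hg h hh (e₂.injective h₁) (e₃.injective h₂))
  · exact congrArg _ (h2.2.1 g hg h hh (e₁.injective h₁) (e₃.injective h₂))
  · exact congrArg _ (h2.2.2 g hg h hh (e₁.injective h₁) (e₂.injective h₂))

end IsTwoInjective3

variable (G₁ G₂ G₃) in
def prodCycle : G₁ × G₂ × G₃ ≃* G₂ × G₃ × G₁ :=
  MulEquiv.prodComm.trans MulEquiv.prodAssoc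

theorem mk_mem_map_prodCycle (h : (a, b, c) ∈ Γ) :
    (b, c, a) ∈ Γ.map (prodCycle G₁ G₂ G₃).toMonoidHom :=
  Subgroup.mem_map_of_mem _ h

theorem IsSubdirect3.map_prodCycle (hsd : IsSubdirect3 Γ) :
    IsSubdirect3 (Γ.map (prodCycle G₁ G₂ G₃).toMonoidHom) := by
  refine ⟨fun x => ?_, fun x => ?_, fun x => ?_⟩
  · obtain ⟨g, hg, hx⟩ := hsd.2.1 x
    exact ⟨_, Subgroup.mem_map_of_mem _ hg, hx⟩
  · obtain ⟨g, hg, hx⟩ := hsd.2.2 x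
    exact ⟨_, Subgroup.mem_map_of_mem _ hg, hx⟩
  · obtain ⟨g, hg, hx⟩ := hsd.1 x
    exact ⟨_, Subgroup.mem_map_of_mem _ hg, hx⟩

theorem IsTwoInjective3.map_prodCycle (h2 : IsTwoInjective3 Γ) :
    IsTwoInjective3 (Γ.map (prodCycle G₁ G₂ G₃).toMonoidHom) := by
  refine ⟨?_, ?_, ?_⟩ <;> rintro _ ⟨g, hg, rfl⟩ _ ⟨h, hh, rfl⟩ h₁ h₂
  · exact congrArg _ (h2.2.1 g hg h hh h₂ h₁)
  · exact congrArg _ (h2.2.2 g hg h hh h₂ h₁)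
  · exact congrArg _ (h2.1 g hg h hh h₁ h₂)

end TwoInjective

namespace DihedralGroup

variable {n : ℕ}

theorem r_mul_self_eq_one_iff {i : ZMod n} : r i * r i = 1 ↔ i + i = 0 := by
  rw [r_mul_r, ← r_zero, r.injEq]

theorem commute_r_r (i j : ZMod n) : Commute (r i) (r j) := by
  simp only [Commute, SemiconjBy, r_mul_r, add_comm]

theorem commute_r_sr_iff {i j : ZMod n} : Commute (r i) (sr j) ↔ i + i = 0 := by
  simp only [Commute, SemiconjBy, r_mul_sr, sr_mul_r, sr.injEq]
  constructor <;> intro h <;> linear_combination -h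

theorem commute_sr_sr_iff {i j : ZMod n} : Commute (sr i) (sr j) ↔ (i - j) + (i - j) = 0 := by
  simp only [Commute, SemiconjBy, sr_mul_sr, r.injEq]
  constructor <;> intro h <;> linear_combination -h

theorem commute_r_of_add_self_eq_zero {i : ZMod n} (h : i + i = 0) :
    ∀ g : DihedralGroup n, Commute (r i) g
  | r j => commute_r_r i j
  | sr _ => commute_r_sr_iff.mpr h

def affineEquiv (w : (ZMod n)ˣ) (k : ZMod n) : DihedralGroup n ≃* DihedralGroup n where
  toFun
    | r i => r ((w : ZMod n) * i)
    | sr i => sr ((w : ZMod n) * i + k)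
  invFun
    | r i => r (↑w⁻¹ * i)
    | sr i => sr (↑w⁻¹ * (i - k))
  left_inv := by rintro (i | i) <;> simp
  right_inv := by rintro (i | i) <;> simp
  map_mul' := by
    rintro (i | i) (j | j) <;> simp only [r_mul_r, r_mul_sr, sr_mul_r, sr_mul_sr] <;> congr 1 <;>
      ring

@[simp] theorem affineEquiv_r (w : (ZMod n)ˣ) (k i : ZMod n) :
    affineEquiv w k (r i) = r ((w : ZMod n) * i) :=
  rfl

@[simp] theorem affineEquiv_sr (w : (ZMod n)ˣ) (k i : ZMod n) :
    affineEquiv w k (sr i) = sr ((w : ZMod n) * i + k) :=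
  rfl

end DihedralGroup

local notation "D₄" => DihedralGroup 4

section ZModFour

theorem eq_zero_or_add_self_add_eq_zero {m w : ZMod 4} (hm : m + m ≠ 0) (hw : w + w = 0) :
    w = 0 ∨ m + m + w = 0 := by
  revert m w; decide

theorem mul_self_eq_one_of_add_self_ne_zero {m : ZMod 4} (hm : m + m ≠ 0) : m * m = 1 := by
  revert m; decide

theorem add_self_sub_eq_zero_of_add_self_ne_zero {m m' : ZMod 4} (hm : m + m ≠ 0)
    (hm' : m' + m' ≠ 0) : (m - m') + (m - m') = 0 := by
  revert m m'; decide

end ZModFour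

section DoubleCFI

theorem one_sr_sr_mem_doubleCFI : ((1 : D₄), sr 0, sr 0) ∈ doubleCFI :=
  Subgroup.subset_closure (by simp)

theorem sr_one_sr_mem_doubleCFI : ((sr 0 : D₄), 1, sr 0) ∈ doubleCFI :=
  Subgroup.subset_closure (by simp)

theorem r_r_sr_mem_doubleCFI : ((r 1 : D₄), r 1, sr 1) ∈ doubleCFI :=
  Subgroup.subset_closure (by simp)

theorem exists_mem_doubleCFI_fst_eq (x : D₄) : ∃ δ ∈ doubleCFI, δ.1 = x := by
  obtain ⟨e, k, h⟩ : ∃ e : Fin 2, ∃ k : Fin 4, (sr 0 : D₄) ^ (e : ℕ) * r 1 ^ (k : ℕ) = x := by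
    revert x; decide
  exact ⟨_, mul_mem (pow_mem sr_one_sr_mem_doubleCFI _) (pow_mem r_r_sr_mem_doubleCFI _), h⟩

theorem mk_one_self_self_mem_doubleCFI {y : D₄} (hy : Commute y (sr 0)) :
    ((1 : D₄), y, y) ∈ doubleCFI := by
  obtain ⟨e₁, e₂, h⟩ := (by decide : ∀ y : D₄, y * sr 0 = sr 0 * y → ∃ e₁ e₂ : Fin 2,
    ((1 : D₄), y, y) = (((r 1 : D₄), (r 1 : D₄), (sr 1 : D₄)) * (1, sr 0, sr 0) *
      (r 1, r 1, sr 1)⁻¹) ^ (e₁ : ℕ) * (1, sr 0, sr 0) ^ (e₂ : ℕ)) y hy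
  rw [h]
  exact mul_mem (pow_mem (mul_mem (mul_mem r_r_sr_mem_doubleCFI one_sr_sr_mem_doubleCFI)
    (inv_mem r_r_sr_mem_doubleCFI)) _) (pow_mem one_sr_sr_mem_doubleCFI _)

theorem IsTwoInjective3.eq_doubleCFI {Γ : Subgroup (D₄ × D₄ × D₄)} (h2 : IsTwoInjective3 Γ)
    (hle : doubleCFI ≤ Γ) : Γ = doubleCFI := by
  refine le_antisymm (fun g hg => ?_) hle
  obtain ⟨δ, hδ, hδg⟩ := exists_mem_doubleCFI_fst_eq g.1
  obtain ⟨⟨x, y, z⟩, hh, rfl⟩ : ∃ h ∈ Γ, δ * h = g :=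
    ⟨δ⁻¹ * g, Γ.mul_mem (Γ.inv_mem (hle hδ)) hg, mul_inv_cancel_left δ g⟩
  obtain rfl : x = 1 := left_eq_mul.mp hδg
  have hz : Commute z (sr 0) :=
    h2.commute_thd hh (hle sr_one_sr_mem_doubleCFI) (Commute.one_left _) (Commute.one_right _)
  have hy : Commute y (sr 0) :=
    h2.commute_snd hh (hle one_sr_sr_mem_doubleCFI) (Commute.one_left _) hz
  have hyz : ((1 : D₄), y, z) = (1, y, y) :=
    h2.2.2 _ hh _ (hle (mk_one_self_self_mem_doubleCFI hy)) rfl rfl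
  rw [hyz]
  exact mul_mem hδ (mk_one_self_self_mem_doubleCFI hy)

theorem doubleCFI_le_of_mem {Γ : Subgroup (D₄ × D₄ × D₄)} {e : ZMod 4} (he : e + e = 0)
    (ha : ((1 : D₄), sr e, sr e) ∈ Γ) (hb : ((sr 0 : D₄), 1, sr 0) ∈ Γ)
    (hc : ((r 1 : D₄), r 1, sr 1) ∈ Γ) : doubleCFI ≤ Γ := by
  have ha₀ : ((1 : D₄), sr 0, sr 0) ∈ Γ := by
    obtain rfl | rfl := (by decide : ∀ e : ZMod 4, e + e = 0 → e = 0 ∨ e = 2) e he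
    · exact ha
    · rw [show ((1 : D₄), sr 0, sr 0) = (r 1, r 1, sr 1)⁻¹ * (1, sr 2, sr 2) * (r 1, r 1, sr 1) by
        decide]
      exact mul_mem (mul_mem (inv_mem hc) ha) hc
  rw [doubleCFI, Subgroup.closure_le]
  rintro g (rfl | rfl | rfl) <;> assumption

end DoubleCFI

section Classification

variable {Γ : Subgroup (D₄ × D₄ × D₄)} {x y z : ZMod 4}

theorem not_commute_sr_r_one (z : ZMod 4) : ¬ Commute (sr z : D₄) (r 1) :=
  fun h => absurd (commute_r_sr_iff.mp h.symm) (by decide)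

theorem add_self_eq_zero_of_sr_sr_r_mem (h2 : IsTwoInjective3 Γ) {i j k : ZMod 4}
    (h : (sr i, sr j, r k) ∈ Γ) : k + k = 0 :=
  r_mul_self_eq_one_iff.mp (h2.thd_mul_self_eq_one h (sr_mul_self i) (sr_mul_self j))

theorem add_self_ne_zero_of_r_r_sr_mem (hsd : IsSubdirect3 Γ) (h2 : IsTwoInjective3 Γ)
    (hC : (r x, r y, sr z) ∈ Γ) : x + x ≠ 0 ∧ y + y ≠ 0 := by
  have hxy : x + x = 0 ↔ y + y = 0 := by
    simp only [← r_mul_self_eq_one_iff]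
    exact ⟨fun hx => h2.snd_mul_self_eq_one hC hx (sr_mul_self z),
      fun hy => h2.fst_mul_self_eq_one hC hy (sr_mul_self z)⟩
  obtain ⟨⟨γ₁, γ₂, _⟩, hγ, rfl⟩ := hsd.2.2 (r 1)
  have : ¬ (x + x = 0 ∧ y + y = 0) := fun ⟨hx, hy⟩ => not_commute_sr_r_one z <|
    h2.commute_thd hC hγ (commute_r_of_add_self_eq_zero hx γ₁)
      (commute_r_of_add_self_eq_zero hy γ₂)
  tauto

theorem exists_sr_r_sr_mem_of_r_sr_r_mem (hsd : IsSubdirect3 Γ) (hC : (r x, r y, sr z) ∈ Γ)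
    {i j k : ZMod 4} (hγ : (r i, sr j, r k) ∈ Γ) : ∃ u f v, (sr u, r f, sr v) ∈ Γ := by
  obtain ⟨⟨_, δ₂, δ₃⟩, hδ, rfl⟩ := hsd.1 (sr 0)
  rcases δ₂ with j' | j' <;> rcases δ₃ with k' | k'
  · exact ⟨_, _, _, by simpa using Γ.mul_mem hδ hC⟩
  · exact ⟨_, _, _, hδ⟩
  · exact ⟨_, _, _, by simpa using Γ.mul_mem hδ (Γ.mul_mem hC hγ)⟩
  · exact ⟨_, _, _, by simpa using Γ.mul_mem hδ hγ⟩

theorem exists_r_sr_sr_mem_of_sr_r_r_mem (hsd : IsSubdirect3 Γ) (hC : (r x, r y, sr z) ∈ Γ)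
    {i j k : ZMod 4} (hγ : (sr i, r j, r k) ∈ Γ) : ∃ w s t, (r w, sr s, sr t) ∈ Γ := by
  obtain ⟨⟨δ₁, _, δ₃⟩, hδ, rfl⟩ := hsd.2.1 (sr 0)
  rcases δ₁ with i' | i' <;> rcases δ₃ with k' | k'
  · exact ⟨_, _, _, by simpa using Γ.mul_mem hδ hC⟩
  · exact ⟨_, _, _, hδ⟩
  · exact ⟨_, _, _, by simpa using Γ.mul_mem hδ (Γ.mul_mem hC hγ)⟩
  · exact ⟨_, _, _, by simpa using Γ.mul_mem hδ hγ⟩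

theorem exists_r_sr_sr_mem_and_exists_sr_r_sr_mem (hsd : IsSubdirect3 Γ) (h2 : IsTwoInjective3 Γ)
    (hC : (r x, r y, sr z) ∈ Γ) :
    (∃ w s t, (r w, sr s, sr t) ∈ Γ) ∧ ∃ u f v, (sr u, r f, sr v) ∈ Γ := by
  obtain ⟨⟨γ₁, γ₂, _⟩, hγ, rfl⟩ := hsd.2.2 (r 1)
  rcases γ₁ with i | i <;> rcases γ₂ with j | j
  · exact absurd (h2.commute_thd hC hγ (commute_r_r x i) (commute_r_r y j))
      (not_commute_sr_r_one z)
  · exact ⟨⟨_, _, _, by simpa using Γ.mul_mem hC hγ⟩, exists_sr_r_sr_mem_of_r_sr_r_mem hsd hC hγ⟩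
  · exact ⟨exists_r_sr_sr_mem_of_sr_r_r_mem hsd hC hγ, ⟨_, _, _, by simpa using Γ.mul_mem hC hγ⟩⟩
  · exact absurd (add_self_eq_zero_of_sr_sr_r_mem h2 hγ) (by decide)

theorem exists_one_sr_sr_mem (h2 : IsTwoInjective3 Γ) (hx : x + x ≠ 0)
    (hC : (r x, r y, sr z) ∈ Γ) {w s t : ZMod 4} (hA : (r w, sr s, sr t) ∈ Γ) :
    ∃ p, ((1 : D₄), sr p, sr t) ∈ Γ := by
  have hw := r_mul_self_eq_one_iff.mp (h2.fst_mul_self_eq_one hA (sr_mul_self s) (sr_mul_self t))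
  obtain hw | hw := eq_zero_or_add_self_add_eq_zero hx hw
  · exact ⟨s, by simpa [hw] using hA⟩
  · exact ⟨_, by simpa [hw] using Γ.mul_mem (Γ.mul_mem hC hC) hA⟩

theorem exists_sr_one_sr_mem (h2 : IsTwoInjective3 Γ) (hy : y + y ≠ 0)
    (hC : (r x, r y, sr z) ∈ Γ) {u f v : ZMod 4} (hB : (sr u, r f, sr v) ∈ Γ) :
    ∃ u', ((sr u' : D₄), 1, sr v) ∈ Γ := by
  have hf := r_mul_self_eq_one_iff.mp (h2.snd_mul_self_eq_one hB (sr_mul_self u) (sr_mul_self v))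
  obtain hf | hf := eq_zero_or_add_self_add_eq_zero hy hf
  · exact ⟨u, by simpa [hf] using hB⟩
  · exact ⟨_, by simpa [hf] using Γ.mul_mem (Γ.mul_mem hC hC) hB⟩

theorem add_self_sub_ne_zero_of_one_sr_sr_mem (h2 : IsTwoInjective3 Γ) (hy : y + y ≠ 0)
    (hC : (r x, r y, sr z) ∈ Γ) {p t : ZMod 4} (hA : ((1 : D₄), sr p, sr t) ∈ Γ) :
    (z - t) + (z - t) ≠ 0 := fun h =>
  hy (commute_r_sr_iff.mp (h2.commute_snd hC hA (Commute.one_right _) (commute_sr_sr_iff.mpr h)))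

theorem add_self_sub_ne_zero_of_sr_one_sr_mem (h2 : IsTwoInjective3 Γ) (hx : x + x ≠ 0)
    (hC : (r x, r y, sr z) ∈ Γ) {u v : ZMod 4} (hB : ((sr u : D₄), 1, sr v) ∈ Γ) :
    (z - v) + (z - v) ≠ 0 := fun h =>
  hx (commute_r_sr_iff.mp (h2.commute_fst hC hB (Commute.one_right _) (commute_sr_sr_iff.mpr h)))

theorem exists_doubleCFI_le_map (hx : x + x ≠ 0) (hy : y + y ≠ 0) (hC : (r x, r y, sr z) ∈ Γ)
    {p t u v : ZMod 4} (hA : ((1 : D₄), sr p, sr t) ∈ Γ) (hB : ((sr u : D₄), 1, sr v) ∈ Γ)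
    (ht : (z - t) + (z - t) ≠ 0) (hv : (z - v) + (z - v) ≠ 0) :
    ∃ e₁ e₂ e₃ : D₄ ≃* D₄, doubleCFI ≤ Γ.map (e₁.prodCongr (e₂.prodCongr e₃)).toMonoidHom := by
  have hxx := mul_self_eq_one_of_add_self_ne_zero hx
  have hyy := mul_self_eq_one_of_add_self_ne_zero hy
  have hvv := mul_self_eq_one_of_add_self_ne_zero hv
  have he : (z - v) * (t - v) + (z - v) * (t - v) = 0 := by
    linear_combination (z - v) * add_self_sub_eq_zero_of_add_self_ne_zero hv ht
  -- Odd elements of `ZMod 4` are their own inverses. The automorphisms below send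
  -- `(r x, r y, sr z)`, `(sr u, 1, sr v)`, `(1, sr p, sr t)` to `(r 1, r 1, sr 1)`,
  -- `(sr 0, 1, sr 0)`, `(1, sr e, sr e)` with `e = (z - v) * (t - v)`.
  refine ⟨affineEquiv (.mkOfMulEqOne x x hxx) (-(x * u)),
    affineEquiv (.mkOfMulEqOne y y hyy) ((z - v) * (t - v) - y * p),
    affineEquiv (.mkOfMulEqOne (z - v) (z - v) hvv) (-((z - v) * v)), doubleCFI_le_of_mem he
    ⟨_, hA, ?_⟩ ⟨_, hB, ?_⟩ ⟨_, hC, ?_⟩⟩ <;>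
    simp only [MulEquiv.prodCongr, MulEquiv.toEquiv_eq_coe, MulEquiv.toMonoidHom_eq_coe,
      MonoidHom.coe_coe, MulEquiv.coe_mk, Equiv.prodCongr_apply, EquivLike.coe_coe,
      Prod.map_apply, map_one, affineEquiv_r, affineEquiv_sr, Units.val_mkOfMulEqOne,
      add_sub_cancel, add_neg_cancel, Prod.mk.injEq, r.injEq, sr.injEq, true_and]
  · ring
  · exact ⟨hxx, hyy, by linear_combination hvv⟩

theorem nonempty_mulEquiv_doubleCFI_of_r_r_sr_mem (hsd : IsSubdirect3 Γ) (h2 : IsTwoInjective3 Γ)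
    (hC : (r x, r y, sr z) ∈ Γ) : Nonempty (Γ ≃* doubleCFI) := by
  obtain ⟨hx, hy⟩ := add_self_ne_zero_of_r_r_sr_mem hsd h2 hC
  obtain ⟨⟨w, s, t, hA⟩, u, f, v, hB⟩ := exists_r_sr_sr_mem_and_exists_sr_r_sr_mem hsd h2 hC
  obtain ⟨p, hA⟩ := exists_one_sr_sr_mem h2 hx hC hA
  obtain ⟨u, hB⟩ := exists_sr_one_sr_mem h2 hy hC hB
  obtain ⟨e₁, e₂, e₃, hle⟩ := exists_doubleCFI_le_map hx hy hC hA hB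
    (add_self_sub_ne_zero_of_one_sr_sr_mem h2 hy hC hA)
    (add_self_sub_ne_zero_of_sr_one_sr_mem h2 hx hC hB)
  exact ⟨((e₁.prodCongr (e₂.prodCongr e₃)).subgroupMap Γ).trans
    (MulEquiv.subgroupCongr ((h2.map_prodCongr e₁ e₂ e₃).eq_doubleCFI hle))⟩

theorem nonempty_mulEquiv_doubleCFI_of_sr_r_r_mem (hsd : IsSubdirect3 Γ) (h2 : IsTwoInjective3 Γ)
    {i j k : ZMod 4} (h : (sr i, r j, r k) ∈ Γ) : Nonempty (Γ ≃* doubleCFI) :=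
  (nonempty_mulEquiv_doubleCFI_of_r_r_sr_mem hsd.map_prodCycle h2.map_prodCycle
    (mk_mem_map_prodCycle h)).map ((prodCycle _ _ _).subgroupMap Γ).trans

theorem nonempty_mulEquiv_doubleCFI_of_r_sr_r_mem (hsd : IsSubdirect3 Γ) (h2 : IsTwoInjective3 Γ)
    {i j k : ZMod 4} (h : (r i, sr j, r k) ∈ Γ) : Nonempty (Γ ≃* doubleCFI) :=
  (nonempty_mulEquiv_doubleCFI_of_sr_r_r_mem hsd.map_prodCycle h2.map_prodCycle
    (mk_mem_map_prodCycle h)).map ((prodCycle _ _ _).subgroupMap Γ).trans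

theorem nonempty_mulEquiv_doubleCFI_of_sr_sr_r_mem (hsd : IsSubdirect3 Γ) (h2 : IsTwoInjective3 Γ)
    {i j k : ZMod 4} (h : (sr i, sr j, r k) ∈ Γ) : Nonempty (Γ ≃* doubleCFI) := by
  obtain ⟨⟨γ₁, γ₂, _⟩, hγ, rfl⟩ := hsd.2.2 (r 1)
  rcases γ₁ with a | a <;> rcases γ₂ with b | b
  · have hk := add_self_eq_zero_of_sr_sr_r_mem h2 h
    have hk₁ := add_self_eq_zero_of_sr_sr_r_mem h2 (i := i + a) (j := j + b) (k := k + 1)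
      (by simpa using Γ.mul_mem h hγ)
    exact absurd (by linear_combination hk₁ - hk : (2 : ZMod 4) = 0) (by decide)
  · exact nonempty_mulEquiv_doubleCFI_of_r_sr_r_mem hsd h2 hγ
  · exact nonempty_mulEquiv_doubleCFI_of_sr_r_r_mem hsd h2 hγ
  · exact absurd (add_self_eq_zero_of_sr_sr_r_mem h2 hγ) (by decide)

theorem nonempty_mulEquiv_doubleCFI_of_r_sr_sr_mem (hsd : IsSubdirect3 Γ) (h2 : IsTwoInjective3 Γ)
    {i j k : ZMod 4} (h : (r i, sr j, sr k) ∈ Γ) : Nonempty (Γ ≃* doubleCFI) :=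
  (nonempty_mulEquiv_doubleCFI_of_sr_sr_r_mem hsd.map_prodCycle h2.map_prodCycle
    (mk_mem_map_prodCycle h)).map ((prodCycle _ _ _).subgroupMap Γ).trans

theorem nonempty_mulEquiv_doubleCFI_of_sr_r_sr_mem (hsd : IsSubdirect3 Γ) (h2 : IsTwoInjective3 Γ)
    {i j k : ZMod 4} (h : (sr i, r j, sr k) ∈ Γ) : Nonempty (Γ ≃* doubleCFI) :=
  (nonempty_mulEquiv_doubleCFI_of_r_sr_sr_mem hsd.map_prodCycle h2.map_prodCycle
    (mk_mem_map_prodCycle h)).map ((prodCycle _ _ _).subgroupMap Γ).trans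

end Classification

theorem statement_6
    (Γ : Subgroup (DihedralGroup 4 × DihedralGroup 4 × DihedralGroup 4))
    (hsd : IsSubdirect3 Γ) (h2inj : IsTwoInjective3 Γ)
    (hnot : ¬ IsRotateOrReflect3 Γ) :
    Nonempty (Γ ≃* doubleCFI) := by
  obtain ⟨⟨a, b, c⟩, hg, hmix⟩ := not_forall₂.mp hnot
  rcases a with i | i <;> rcases b with j | j <;> rcases c with k | k
  · exact absurd (Or.inl ⟨⟨i, rfl⟩, ⟨j, rfl⟩, ⟨k, rfl⟩⟩) hmix
  · exact nonempty_mulEquiv_doubleCFI_of_r_r_sr_mem hsd h2inj hg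
  · exact nonempty_mulEquiv_doubleCFI_of_r_sr_r_mem hsd h2inj hg
  · exact nonempty_mulEquiv_doubleCFI_of_r_sr_sr_mem hsd h2inj hg
  · exact nonempty_mulEquiv_doubleCFI_of_sr_r_r_mem hsd h2inj hg
  · exact nonempty_mulEquiv_doubleCFI_of_sr_r_sr_mem hsd h2inj hg
  · exact nonempty_mulEquiv_doubleCFI_of_sr_sr_r_mem hsd h2inj hg
  · exact absurd (Or.inr ⟨⟨i, rfl⟩, ⟨j, rfl⟩, ⟨k, rfl⟩⟩) hmix
end

section
/- Let Γ ≤ Dᵢ × D_j × D_k be a 2-injective 3-factor subdirect product with i ∈ {1,2} and j, k > 2. Then the projection of Γ onto the second and third factors, π̄₁(Γ) ≤ D_j × D_k, is a rotate-or-reflect group. -/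
open DihedralGroup in
lemma dihedral_sq_one {i : ℕ} (hi : i ∈ ({1, 2} : Set ℕ)) (x : DihedralGroup i) :
    x * x = 1 := by
  rcases hi with rfl | rfl <;> revert x <;> decide

open DihedralGroup in
lemma two_ne_zero_zmod {j : ℕ} (hj : 2 < j) : ((1 : ZMod j) + 1) ≠ 0 := by
  have h1 : ((1 : ZMod j) + 1) = ((2 : ℕ) : ZMod j) := by push_cast; ring
  intro h0
  rw [h1, ZMod.natCast_eq_zero_iff] at h0
  exact absurd (Nat.le_of_dvd (by norm_num) h0) (by omega)


open DihedralGroup in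
theorem statement_7 {i j k : ℕ} (hi : i ∈ ({1, 2} : Set ℕ)) (hj : 2 < j) (hk : 2 < k)
    (Γ : Subgroup (DihedralGroup i × DihedralGroup j × DihedralGroup k))
    (hsd : IsSubdirect3 Γ) (h2inj : IsTwoInjective3 Γ) :
    IsRotateOrReflect2
      (Γ.map (MonoidHom.snd (DihedralGroup i) (DihedralGroup j × DihedralGroup k))) := by
  -- key lemma A: if the 2nd coord is a reflection, the 3rd coord squares to 1
  have hA : ∀ w ∈ Γ, IsReflection w.2.1 → w.2.2 * w.2.2 = 1 := by
    rintro w hw ⟨c, hc⟩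
    have hww : w * w ∈ Γ := mul_mem hw hw
    have h1 : (w * w).1 = (1 : DihedralGroup i × DihedralGroup j × DihedralGroup k).1 :=
      dihedral_sq_one hi w.1
    have h2 : (w * w).2.1 = (1 : DihedralGroup i × DihedralGroup j × DihedralGroup k).2.1 := by
      show w.2.1 * w.2.1 = 1
      rw [hc]; exact sr_mul_self c
    have := h2inj.2.2 (w * w) hww 1 (one_mem Γ) h1 h2
    calc w.2.2 * w.2.2 = (w * w).2.2 := rfl
      _ = 1 := by rw [this]; rfl
  -- key lemma B: if the 3rd coord is a reflection, the 2nd coord squares to 1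
  have hB : ∀ w ∈ Γ, IsReflection w.2.2 → w.2.1 * w.2.1 = 1 := by
    rintro w hw ⟨c, hc⟩
    have hww : w * w ∈ Γ := mul_mem hw hw
    have h1 : (w * w).1 = (1 : DihedralGroup i × DihedralGroup j × DihedralGroup k).1 :=
      dihedral_sq_one hi w.1
    have h2 : (w * w).2.2 = (1 : DihedralGroup i × DihedralGroup j × DihedralGroup k).2.2 := by
      show w.2.2 * w.2.2 = 1
      rw [hc]; exact sr_mul_self c
    have := h2inj.2.1 (w * w) hww 1 (one_mem Γ) h1 h2
    calc w.2.1 * w.2.1 = (w * w).2.1 := rfl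
      _ = 1 := by rw [this]; rfl
  rintro g ⟨γ, hγ, rfl⟩
  rcases hγ2 : γ.2.1 with a | a <;> rcases hγ3 : γ.2.2 with b | b
  · exact Or.inl ⟨⟨a, congrArg Prod.fst rfl ▸ hγ2⟩, ⟨b, hγ3⟩⟩
  · -- γ.2.1 = r a, γ.2.2 = sr b : impossible
    exfalso
    obtain ⟨h, hh, hh2⟩ := hsd.2.1 (r 1)
    have hh3 : IsRotation h.2.2 := by
      rcases hc : h.2.2 with c | c
      · exact ⟨c, rfl⟩
      · have := hB h hh ⟨c, hc⟩
        rw [hh2, r_mul_r] at this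
        rw [one_def] at this
        exact absurd (r.inj this) (two_ne_zero_zmod hj)
    obtain ⟨c, hc⟩ := hh3
    have hγh : γ * h ∈ Γ := mul_mem hγ hh
    have hrefl : IsReflection (γ * h).2.2 := by
      show IsReflection (γ.2.2 * h.2.2)
      rw [hγ3, hc, sr_mul_r]
      exact ⟨b + c, rfl⟩
    have e1 := hB γ hγ ⟨b, hγ3⟩
    have e2 := hB (γ * h) hγh hrefl
    rw [hγ2, r_mul_r] at e1
    have e2' : γ.2.1 * h.2.1 * (γ.2.1 * h.2.1) = 1 := e2
    rw [hγ2, hh2, r_mul_r, r_mul_r] at e2'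
    rw [one_def] at e1 e2'
    have ha : a + a = 0 := r.inj e1
    have hab : a + 1 + (a + 1) = 0 := r.inj e2'
    apply two_ne_zero_zmod hj
    have : a + a + (1 + 1) = a + 1 + (a + 1) := by ring
    rw [ha, zero_add] at this
    rw [this, hab]
  · -- γ.2.1 = sr a, γ.2.2 = r b : impossible
    exfalso
    obtain ⟨h, hh, hh3⟩ := hsd.2.2 (r 1)
    have hh2 : IsRotation h.2.1 := by
      rcases hc : h.2.1 with c | c
      · exact ⟨c, rfl⟩
      · have := hA h hh ⟨c, hc⟩
        rw [hh3, r_mul_r] at this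
        rw [one_def] at this
        exact absurd (r.inj this) (two_ne_zero_zmod hk)
    obtain ⟨c, hc⟩ := hh2
    have hγh : γ * h ∈ Γ := mul_mem hγ hh
    have hrefl : IsReflection (γ * h).2.1 := by
      show IsReflection (γ.2.1 * h.2.1)
      rw [hγ2, hc, sr_mul_r]
      exact ⟨a + c, rfl⟩
    have e1 := hA γ hγ ⟨a, hγ2⟩
    have e2 := hA (γ * h) hγh hrefl
    rw [hγ3, r_mul_r] at e1
    have e2' : γ.2.2 * h.2.2 * (γ.2.2 * h.2.2) = 1 := e2
    rw [hγ3, hh3, r_mul_r, r_mul_r] at e2'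
    rw [one_def] at e1 e2'
    have hb : b + b = 0 := r.inj e1
    have hbb : b + 1 + (b + 1) = 0 := r.inj e2'
    apply two_ne_zero_zmod hk
    have : b + b + (1 + 1) = b + 1 + (b + 1) := by ring
    rw [hb, zero_add] at this
    rw [this, hbb]
  · exact Or.inr ⟨⟨a, hγ2⟩, ⟨b, hγ3⟩⟩
end

section
/- Let i > 2 and let G₂ and G₃ be abelian finite groups. Then there is no 2-injective 3-factor subdirect product of Dᵢ × G₂ × G₃. -/
theorem statement_8 {i : ℕ} (hi : 2 < i) {G₂ G₃ : Type*}
    [CommGroup G₂] [CommGroup G₃] [Finite G₂] [Finite G₃] :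
    ¬ ∃ Γ : Subgroup (DihedralGroup i × G₂ × G₃),
        IsSubdirect3 Γ ∧ IsTwoInjective3 Γ := by
  rintro ⟨Γ, ⟨hs1, -, -⟩, ⟨hinj, -, -⟩⟩
  have hcomm : ∀ a b : DihedralGroup i, a * b = b * a := by
    intro a b
    obtain ⟨g, hg, hga⟩ := hs1 a
    obtain ⟨h, hh, hhb⟩ := hs1 b
    have key := hinj (g * h) (Γ.mul_mem hg hh) (h * g) (Γ.mul_mem hh hg)
      (mul_comm g.2.1 h.2.1) (mul_comm g.2.2 h.2.2)
    subst hga hhb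
    exact congrArg Prod.fst key
  have h1 := hcomm (DihedralGroup.r 1) (DihedralGroup.sr 0)
  simp [DihedralGroup.r_mul_sr, DihedralGroup.sr_mul_r] at h1
  have h2 : ((2 : ℕ) : ZMod i) = 0 := by
    push_cast
    linear_combination -h1
  rw [ZMod.natCast_eq_zero_iff] at h2
  exact absurd (Nat.le_of_dvd (by norm_num) h2) (by omega)
end

section
/- For every i ∉ {1,2,4}, there is no 2-injective 3-factor subdirect product of D₄ × D₄ × Dᵢ. -/
/-- Every element of `D₄` has order dividing 4. -/
lemma d4_pow_four (x : DihedralGroup 4) : x ^ 4 = 1 := by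
  revert x; decide

theorem statement_9 {i : ℕ} (hpos : 0 < i) (hi : i ∉ ({1, 2, 4} : Set ℕ)) :
    ¬ ∃ Γ : Subgroup (DihedralGroup 4 × DihedralGroup 4 × DihedralGroup i),
        IsSubdirect3 Γ ∧ IsTwoInjective3 Γ := by
  rintro ⟨Γ, ⟨-, -, h3⟩, -, -, hinj⟩
  -- pick g ∈ Γ whose third coordinate is the rotation r 1
  obtain ⟨g, hg, hg3⟩ := h3 (DihedralGroup.r 1)
  have hg4 : g ^ 4 ∈ Γ := pow_mem hg 4
  -- the first two coordinates of g ^ 4 are trivial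
  have h1 : (g ^ 4).1 = (1 : DihedralGroup 4) := by
    simpa using d4_pow_four g.1
  have h2 : (g ^ 4).2.1 = (1 : DihedralGroup 4) := by
    simpa using d4_pow_four g.2.1
  -- by 2-injectivity, g ^ 4 = 1
  have heq : g ^ 4 = 1 := by
    have := hinj (g ^ 4) hg4 1 (one_mem Γ) (by simpa using h1) (by simpa using h2)
    simpa using this
  -- hence r 1 ^ 4 = 1 in Dᵢ, so i ∣ 4
  have h3' : (DihedralGroup.r 1 : DihedralGroup i) ^ 4 = 1 := by
    have : (g ^ 4).2.2 = (1 : DihedralGroup i) := by rw [heq]; rfl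
    simpa [hg3] using this
  have hr4 : (DihedralGroup.r ((4 : ℕ) : ZMod i) : DihedralGroup i) = DihedralGroup.r 0 := by
    have : (DihedralGroup.r 1 : DihedralGroup i) ^ 4 = DihedralGroup.r ((4 : ℕ) : ZMod i) := by
      simp [DihedralGroup.r_one_pow]
    rw [← this, h3']
    rfl
  have hz : ((4 : ℕ) : ZMod i) = 0 := by
    injection hr4
  have hdvd : i ∣ 4 := (ZMod.natCast_eq_zero_iff 4 i).mp hz
  have hle : i ≤ 4 := Nat.le_of_dvd (by norm_num) hdvd
  simp only [Set.mem_insert_iff, Set.mem_singleton_iff, not_or] at hi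
  interval_cases i <;> omega
end

section
/- Let Γ ≤ D₄ × D_{n₂} × D_{n₃} be a 2-injective 3-factor subdirect product with n₂, n₃ ∉ {1,2,4}. Then Γ is a rotate-or-reflect group. -/
open DihedralGroup

theorem statement_10 {n₂ n₃ : ℕ} (hp₂ : 0 < n₂) (hp₃ : 0 < n₃)
    (h₂ : n₂ ∉ ({1, 2, 4} : Set ℕ)) (h₃ : n₃ ∉ ({1, 2, 4} : Set ℕ))
    (Γ : Subgroup (DihedralGroup 4 × DihedralGroup n₂ × DihedralGroup n₃))
    (hsd : IsSubdirect3 Γ) (h2inj : IsTwoInjective3 Γ) :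
    IsRotateOrReflect3 Γ := by
  simp only [Set.mem_insert_iff, Set.mem_singleton_iff, not_or] at h₂ h₃
  have hdvd₂ : (4 : ZMod n₂) ≠ 0 := by
    intro h0
    have hd : n₂ ∣ 4 := by
      have := (ZMod.natCast_eq_zero_iff 4 n₂).mp (by exact_mod_cast h0)
      exact this
    have hle := Nat.le_of_dvd (by norm_num) hd
    interval_cases n₂ <;> simp_all <;> omega
  have hdvd₃ : (4 : ZMod n₃) ≠ 0 := by
    intro h0
    have hd : n₃ ∣ 4 := by
      have := (ZMod.natCast_eq_zero_iff 4 n₃).mp (by exact_mod_cast h0)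
      exact this
    have hle := Nat.le_of_dvd (by norm_num) hd
    interval_cases n₃ <;> simp_all <;> omega
  have h4 : (4 : ZMod 4) = 0 := by decide
  -- central squares in D₄
  have hcen : ∀ x y : DihedralGroup 4, x * (y * y) = (y * y) * x := by
    rintro (a | a) (b | b)
    case r.r => simp only [r_mul_r, r.injEq]; ring
    case r.sr => simp only [sr_mul_sr, r_mul_r, r.injEq]; ring
    case sr.r =>
      simp only [r_mul_r, sr_mul_r, r_mul_sr, sr.injEq]
      linear_combination h4 * b
    case sr.sr => simp only [sr_mul_sr, sr_mul_r, r_mul_sr, sr.injEq]; ring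
  -- rotations commute with squares
  have hrotsq : ∀ {n : ℕ} (b : ZMod n) (y : DihedralGroup n),
      r b * (y * y) = (y * y) * r b := by
    rintro n b (u | u) <;>
      simp only [r_mul_r, r_mul_sr, sr_mul_r, sr_mul_sr, r.injEq] <;> ring
  -- Fact 1a : no element with coord2 a rotation and coord3 a reflection
  have fact1a : ∀ g ∈ Γ, ∀ (b : ZMod n₂) (c : ZMod n₃),
      g.2.1 = r b → g.2.2 = sr c → False := by
    intro g hg b c hb hc
    obtain ⟨h, hh, hh3⟩ := hsd.2.2 (r 1)
    have hk : h * h ∈ Γ := mul_mem hh hh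
    have key : g * (h * h) = (h * h) * g := by
      apply h2inj.2.2 _ (mul_mem hg hk) _ (mul_mem hk hg)
      · show g.1 * (h.1 * h.1) = (h.1 * h.1) * g.1
        exact hcen _ _
      · show g.2.1 * (h.2.1 * h.2.1) = (h.2.1 * h.2.1) * g.2.1
        rw [hb]; exact hrotsq _ _
    have key3 : g.2.2 * (h.2.2 * h.2.2) = (h.2.2 * h.2.2) * g.2.2 :=
      congrArg (fun z => z.2.2) key
    rw [hc, hh3, r_mul_r, sr_mul_r, r_mul_sr, sr.injEq] at key3
    apply hdvd₃
    linear_combination key3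
  -- Fact 1b : no element with coord2 a reflection and coord3 a rotation
  have fact1b : ∀ g ∈ Γ, ∀ (b : ZMod n₂) (c : ZMod n₃),
      g.2.1 = sr b → g.2.2 = r c → False := by
    intro g hg b c hb hc
    obtain ⟨h, hh, hh2⟩ := hsd.2.1 (r 1)
    have hk : h * h ∈ Γ := mul_mem hh hh
    have key : g * (h * h) = (h * h) * g := by
      apply h2inj.2.1 _ (mul_mem hg hk) _ (mul_mem hk hg)
      · show g.1 * (h.1 * h.1) = (h.1 * h.1) * g.1
        exact hcen _ _
      · show g.2.2 * (h.2.2 * h.2.2) = (h.2.2 * h.2.2) * g.2.2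
        rw [hc]; exact hrotsq _ _
    have key2 : g.2.1 * (h.2.1 * h.2.1) = (h.2.1 * h.2.1) * g.2.1 :=
      congrArg (fun z => z.2.1) key
    rw [hb, hh2, r_mul_r, sr_mul_r, r_mul_sr, sr.injEq] at key2
    apply hdvd₂
    linear_combination key2
  -- squares of (rot, refl, refl) elements are trivial in coordinate 1
  have sq : ∀ g ∈ Γ, ∀ (a : ZMod 4) (b : ZMod n₂) (c : ZMod n₃),
      g.1 = r a → g.2.1 = sr b → g.2.2 = sr c → a + a = 0 := by
    intro g hg a b c ha hb hc
    have key : g * g = 1 := by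
      apply h2inj.1 _ (mul_mem hg hg) _ (one_mem Γ)
      · show g.2.1 * g.2.1 = 1
        rw [hb, sr_mul_sr, sub_self, one_def]
      · show g.2.2 * g.2.2 = 1
        rw [hc, sr_mul_sr, sub_self, one_def]
    have key1 : g.1 * g.1 = 1 := congrArg (fun z => z.1) key
    rw [ha, r_mul_r, one_def, r.injEq] at key1
    exact key1
  have h2ne : (1 + 1 : ZMod 4) ≠ 0 := by decide
  -- Fact 2a : no element of shape (rot, refl, refl)
  have fact2a : ∀ g ∈ Γ, ∀ (a : ZMod 4) (b : ZMod n₂) (c : ZMod n₃),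
      g.1 = r a → g.2.1 = sr b → g.2.2 = sr c → False := by
    intro g hg a b c ha hb hc
    have haa : a + a = 0 := sq g hg a b c ha hb hc
    obtain ⟨h, hh, hh1⟩ := hsd.1 (r 1)
    cases h21 : h.2.1 with
    | r u =>
      cases h22 : h.2.2 with
      | r v =>
        have : (a + 1) + (a + 1) = 0 := by
          apply sq (g * h) (mul_mem hg hh) (a + 1) (b + u) (c + v)
          · show g.1 * h.1 = _
            rw [ha, hh1, r_mul_r]
          · show g.2.1 * h.2.1 = _
            rw [hb, h21, sr_mul_r]
          · show g.2.2 * h.2.2 = _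
            rw [hc, h22, sr_mul_r]
        exact h2ne (by linear_combination this - haa)
      | sr v => exact fact1a h hh u v h21 h22
    | sr u =>
      cases h22 : h.2.2 with
      | r v => exact fact1b h hh u v h21 h22
      | sr v => exact h2ne (sq h hh 1 u v hh1 h21 h22)
  -- Fact 2b : no element of shape (refl, rot, rot)
  have fact2b : ∀ g ∈ Γ, ∀ (a : ZMod 4) (b : ZMod n₂) (c : ZMod n₃),
      g.1 = sr a → g.2.1 = r b → g.2.2 = r c → False := by
    intro g hg a b c ha hb hc
    obtain ⟨h, hh, hh1⟩ := hsd.1 (r 1)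
    cases h21 : h.2.1 with
    | r u =>
      cases h22 : h.2.2 with
      | r v =>
        have key : g * h = h * g := by
          apply h2inj.1 _ (mul_mem hg hh) _ (mul_mem hh hg)
          · show g.2.1 * h.2.1 = h.2.1 * g.2.1
            rw [hb, h21, r_mul_r, r_mul_r, add_comm]
          · show g.2.2 * h.2.2 = h.2.2 * g.2.2
            rw [hc, h22, r_mul_r, r_mul_r, add_comm]
        have key1 : g.1 * h.1 = h.1 * g.1 := congrArg (fun z => z.1) key
        rw [ha, hh1, sr_mul_r, r_mul_sr, sr.injEq] at key1
        exact h2ne (by linear_combination key1)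
      | sr v => exact fact1a h hh u v h21 h22
    | sr u =>
      cases h22 : h.2.2 with
      | r v => exact fact1b h hh u v h21 h22
      | sr v => exact h2ne (sq h hh 1 u v hh1 h21 h22)
  -- main case analysis
  intro g hg
  cases h1 : g.1 with
  | r a =>
    cases h21 : g.2.1 with
    | r b =>
      cases h22 : g.2.2 with
      | r c => exact Or.inl ⟨⟨a, rfl⟩, ⟨b, rfl⟩, ⟨c, rfl⟩⟩
      | sr c => exact (fact1a g hg b c h21 h22).elim
    | sr b =>
      cases h22 : g.2.2 with
      | r c => exact (fact1b g hg b c h21 h22).elim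
      | sr c => exact (fact2a g hg a b c h1 h21 h22).elim
  | sr a =>
    cases h21 : g.2.1 with
    | r b =>
      cases h22 : g.2.2 with
      | r c => exact (fact2b g hg a b c h1 h21 h22).elim
      | sr c => exact (fact1a g hg b c h21 h22).elim
    | sr b =>
      cases h22 : g.2.2 with
      | r c => exact (fact1b g hg b c h21 h22).elim
      | sr c => exact Or.inr ⟨⟨a, rfl⟩, ⟨b, rfl⟩, ⟨c, rfl⟩⟩
end

section
/- For every i ∉ {1,2,4} and all j, k ≥ 1, there is no 2-injective 3-factor subdirect product of Cᵢ × D_j × D_k. -/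
theorem sr_inv {n : ℕ} (v : ZMod n) : (DihedralGroup.sr v)⁻¹ = DihedralGroup.sr v :=
  inv_eq_of_mul_eq_one_right (DihedralGroup.sr_mul_self v)

theorem r_inv {n : ℕ} (v : ZMod n) : (DihedralGroup.r v)⁻¹ = DihedralGroup.r (-v) := by
  refine inv_eq_of_mul_eq_one_right ?_
  rw [DihedralGroup.r_mul_r, add_neg_cancel, DihedralGroup.one_def]

theorem statement_12 {i j k : ℕ} (hip : 0 < i) (hi : i ∉ ({1, 2, 4} : Set ℕ))
    (hj : 1 ≤ j) (hk : 1 ≤ k) :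
    ¬ ∃ Γ : Subgroup (Multiplicative (ZMod i) × DihedralGroup j × DihedralGroup k),
        IsSubdirect3 Γ ∧ IsTwoInjective3 Γ := by
  rintro ⟨Γ, ⟨hs1, hs2, hs3⟩, hinj1, hinj2, hinj3⟩
  -- Lemma A : elements of the form (a, 1, z) in Γ have a² = 1.
  have lemA : ∀ (a : Multiplicative (ZMod i)) (z : DihedralGroup k),
      (a, 1, z) ∈ Γ → a ^ 2 = 1 := by
    intro a z hm
    cases z with
    | sr v =>
      have hsq : ((a, (1 : DihedralGroup j), DihedralGroup.sr v)) ^ 2 ∈ Γ := pow_mem hm 2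
      have h2 : ((a, (1 : DihedralGroup j), DihedralGroup.sr v)) ^ 2
          = (a ^ 2, 1, 1) := by
        rw [sq, Prod.mk_mul_mk, Prod.mk_mul_mk, DihedralGroup.sr_mul_self, one_mul, sq]
      rw [h2] at hsq
      have := hinj1 _ hsq _ Γ.one_mem rfl rfl
      exact congrArg Prod.fst this
    | r v =>
      obtain ⟨h, hhΓ, hh3⟩ := hs3 (DihedralGroup.sr 0)
      have hconj : h * (a, 1, DihedralGroup.r v) * h⁻¹ ∈ Γ :=
        mul_mem (mul_mem hhΓ hm) (inv_mem hhΓ)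
      have hinv : ((a, (1:DihedralGroup j), DihedralGroup.r v))⁻¹ ∈ Γ := inv_mem hm
      have he := hinj1 _ hconj _ hinv ?_ ?_
      · have h1 := congrArg Prod.fst he
        simp only [Prod.fst_mul, Prod.fst_inv] at h1
        have ha : a = a⁻¹ := by
          have hc : h.1 * a * h.1⁻¹ = a := by
            rw [mul_comm h.1 a, mul_assoc, mul_inv_cancel, mul_one]
          rw [hc] at h1; exact h1
        rw [sq]; exact mul_eq_one_iff_eq_inv.mpr ha
      · simp [Prod.snd_mul, Prod.fst_mul]
      · show (h * (a, 1, DihedralGroup.r v) * h⁻¹).2.2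
            = ((a, (1:DihedralGroup j), DihedralGroup.r v))⁻¹.2.2
        simp only [Prod.snd_mul, Prod.snd_inv, Prod.mk_mul_mk, Prod.inv_mk]
        rw [hh3, r_inv, DihedralGroup.sr_mul_r, sr_inv, DihedralGroup.sr_mul_sr]
        ring_nf
  -- Lemma B : for every g ∈ Γ there is z with (g.1², 1, z) ∈ Γ.
  have lemB : ∀ g ∈ Γ, ∃ z, ((g.1 ^ 2, 1, z) :
      Multiplicative (ZMod i) × DihedralGroup j × DihedralGroup k) ∈ Γ := by
    intro g hg
    obtain ⟨ga, ⟨gb, gc⟩⟩ := g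
    cases gb with
    | sr u =>
      refine ⟨gc ^ 2, ?_⟩
      have := pow_mem hg 2
      have h2 : ((ga, (DihedralGroup.sr u : DihedralGroup j), gc)) ^ 2
          = (ga ^ 2, 1, gc ^ 2) := by
        rw [sq, Prod.mk_mul_mk, Prod.mk_mul_mk, DihedralGroup.sr_mul_self, sq, sq]
      rwa [h2] at this
    | r u =>
      obtain ⟨h, hhΓ, hh2⟩ := hs2 (DihedralGroup.sr 0)
      obtain ⟨ha, ⟨hb, hc⟩⟩ := h
      simp only at hh2
      subst hh2
      have hm : ((ga, (DihedralGroup.r u : DihedralGroup j), gc)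
          * (ha, DihedralGroup.sr 0, hc)) ^ 2
          * (((ha, (DihedralGroup.sr 0 : DihedralGroup j), hc)) ^ 2)⁻¹ ∈ Γ :=
        mul_mem (pow_mem (mul_mem hg hhΓ) 2) (inv_mem (pow_mem hhΓ 2))
      refine ⟨(gc * hc) ^ 2 * (hc ^ 2)⁻¹, ?_⟩
      have heq : ((ga, (DihedralGroup.r u : DihedralGroup j), gc)
          * (ha, DihedralGroup.sr 0, hc)) ^ 2
          * (((ha, (DihedralGroup.sr 0 : DihedralGroup j), hc)) ^ 2)⁻¹
          = (ga ^ 2, 1, (gc * hc) ^ 2 * (hc ^ 2)⁻¹) := by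
        simp only [Prod.mk_mul_mk, Prod.pow_mk, Prod.inv_mk, Prod.mk.injEq]
        refine ⟨?_, ?_, trivial⟩
        · rw [mul_pow, mul_inv_cancel_right]
        · rw [DihedralGroup.r_mul_sr, sq, DihedralGroup.sr_mul_self, sq,
            DihedralGroup.sr_mul_self, inv_one, mul_one]
      exact heq ▸ hm
  -- conclude i ∣ 4
  have h4 : ∀ a : Multiplicative (ZMod i), a ^ 4 = 1 := by
    intro a
    obtain ⟨g, hg, hg1⟩ := hs1 a
    obtain ⟨z, hz⟩ := lemB g hg
    have := lemA _ _ hz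
    rw [hg1, ← pow_mul] at this
    exact this
  have hdvd : i ∣ 4 := by
    have := h4 (Multiplicative.ofAdd (1 : ZMod i))
    have h0 : ((4 : ℕ) : ZMod i) = 0 := by
      have := congrArg Multiplicative.toAdd this
      simpa using this
    exact (ZMod.natCast_eq_zero_iff 4 i).mp h0
  have hle : i ≤ 4 := Nat.le_of_dvd (by norm_num) hdvd
  clear h4 lemB lemA hinj1 hinj2 hinj3 hs1 hs2 hs3 Γ
  interval_cases i <;>
    first
      | exact absurd hdvd (by decide)
      | exact hi (by simp)
end

section
/- Let Γ ≤ Cᵢ × D_j × D_k be a 2-injective 3-factor subdirect product with i ≤ 2 and j, k > 2. Then the projection of Γ onto the second and third factors, π̄₁(Γ) ≤ D_j × D_k, is a rotate-or-reflect group. -/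
/-!
If `(x, r a, sr b) ∈ Γ`, its square is trivial on the first and third factors (these have
exponent two), so by 2-injectivity it is trivial; hence `r a ^ 2 = 1` and `r a` is central in
`D_j`. The element then has central first and second coordinates, so by injectivity of the
projection to the first two factors it is central in `Γ`, and `sr b` commutes with the whole
projection `D_k` of `Γ`. But `r 1 * sr b = sr b * r 1` forces `2 = 0` in `ZMod k`. Swapping
the last two factors handles `(x, sr a, r b)`.
-/

open DihedralGroup Subgroup

lemma ZMod.two_ne_zero_of_two_lt {n : ℕ} (hn : 2 < n) : (2 : ZMod n) ≠ 0 := by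
  intro h
  have h2 := ZMod.val_two_eq_two_mod n
  rw [h, ZMod.val_zero, Nat.mod_eq_of_lt hn] at h2
  exact two_ne_zero h2.symm

namespace DihedralGroup

variable {n : ℕ}

lemma r_mem_center_of_sq_eq_one {a : ZMod n} (ha : r a ^ 2 = 1) :
    r a ∈ center (DihedralGroup n) := by
  have hneg : -a = a := by
    rw [sq, r_mul_r, one_def, r.injEq] at ha
    exact neg_eq_of_add_eq_zero_left ha
  refine mem_center_iff.mpr fun g => ?_
  cases g with
  | r b => rw [r_mul_r, r_mul_r, add_comm]
  | sr b => rw [r_mul_sr, sr_mul_r, sub_eq_add_neg, hneg]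

lemma sr_notMem_center (hn : 2 < n) (b : ZMod n) : sr b ∉ center (DihedralGroup n) := by
  intro hb
  have hcomm : r 1 * sr b = sr b * r 1 := mem_center_iff.mp hb (r 1)
  rw [r_mul_sr, sr_mul_r, sr.injEq] at hcomm
  exact ZMod.two_ne_zero_of_two_lt hn (by linear_combination -hcomm)

end DihedralGroup

section ThreeFactors

variable {G₁ G₂ G₃ : Type*} [Group G₁] [Group G₂] [Group G₃] {Γ : Subgroup (G₁ × G₂ × G₃)}

lemma IsTwoInjective3.eq_one_of_fst_of_snd_snd (h : IsTwoInjective3 Γ) {g : G₁ × G₂ × G₃}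
    (hg : g ∈ Γ) (h₁ : g.1 = 1) (h₃ : g.2.2 = 1) : g = 1 :=
  h.2.1 g hg 1 Γ.one_mem h₁ h₃

lemma IsTwoInjective3.snd_snd_mem_center (hsd : IsSubdirect3 Γ) (h : IsTwoInjective3 Γ)
    {g : G₁ × G₂ × G₃} (hg : g ∈ Γ) (h₁ : g.1 ∈ center G₁) (h₂ : g.2.1 ∈ center G₂) :
    g.2.2 ∈ center G₃ := by
  refine mem_center_iff.mpr fun z => ?_
  obtain ⟨f, hf, rfl⟩ := hsd.2.2 z
  have hfg : f * g = g * f := h.2.2 _ (Γ.mul_mem hf hg) _ (Γ.mul_mem hg hf)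
    (mem_center_iff.mp h₁ f.1) (mem_center_iff.mp h₂ f.2.1)
  exact congrArg (fun p => p.2.2) hfg

def swapTail : G₁ × G₂ × G₃ ≃* G₁ × G₃ × G₂ :=
  (MulEquiv.refl G₁).prodCongr (MulEquiv.prodComm)

lemma IsSubdirect3.map_swapTail (h : IsSubdirect3 Γ) :
    IsSubdirect3 (Γ.map swapTail.toMonoidHom) := by
  refine ⟨fun x => ?_, fun x => ?_, fun x => ?_⟩
  · obtain ⟨g, hg, rfl⟩ := h.1 x; exact ⟨_, mem_map_of_mem _ hg, rfl⟩
  · obtain ⟨g, hg, rfl⟩ := h.2.2 x; exact ⟨_, mem_map_of_mem _ hg, rfl⟩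
  · obtain ⟨g, hg, rfl⟩ := h.2.1 x; exact ⟨_, mem_map_of_mem _ hg, rfl⟩

lemma IsTwoInjective3.map_swapTail (h : IsTwoInjective3 Γ) :
    IsTwoInjective3 (Γ.map swapTail.toMonoidHom) := by
  refine ⟨?_, ?_, ?_⟩ <;> rintro _ ⟨g, hg, rfl⟩ _ ⟨f, hf, rfl⟩ e₁ e₂ <;> congr 1
  · exact h.1 g hg f hf e₂ e₁
  · exact h.2.2 g hg f hf e₁ e₂
  · exact h.2.1 g hg f hf e₁ e₂

end ThreeFactors

lemma IsTwoInjective3.rotation_reflection_notMem {A : Type*} [CommGroup A]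
    (hA : ∀ x : A, x ^ 2 = 1) {m n : ℕ} (hn : 2 < n)
    {Γ : Subgroup (A × DihedralGroup m × DihedralGroup n)}
    (hsd : IsSubdirect3 Γ) (h : IsTwoInjective3 Γ) (x : A) (a : ZMod m) (b : ZMod n) :
    (x, r a, sr b) ∉ Γ := by
  intro hg
  have hsq : (x, r a, sr b) ^ 2 = 1 :=
    h.eq_one_of_fst_of_snd_snd (Γ.pow_mem hg 2) (hA x)
      (by rw [Prod.pow_snd, Prod.pow_snd, sq, sr_mul_self])
  have ha : r a ^ 2 = 1 := congrArg (fun p => p.2.1) hsq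
  exact sr_notMem_center hn b <| h.snd_snd_mem_center hsd hg
    (mem_center_iff.mpr fun y => mul_comm y x) (r_mem_center_of_sq_eq_one ha)

theorem statement_13 {i j k : ℕ} (hip : 0 < i) (hi : i ≤ 2) (hj : 2 < j) (hk : 2 < k)
    (Γ : Subgroup (Multiplicative (ZMod i) × DihedralGroup j × DihedralGroup k))
    (hsd : IsSubdirect3 Γ) (h2inj : IsTwoInjective3 Γ) :
    IsRotateOrReflect2
      (Γ.map (MonoidHom.snd (Multiplicative (ZMod i))
        (DihedralGroup j × DihedralGroup k))) := by
  have hsq : ∀ x : Multiplicative (ZMod i), x ^ 2 = 1 := by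
    interval_cases i <;> decide
  rintro _ ⟨⟨x, y, z⟩, hg, rfl⟩
  cases y with
  | r a =>
    cases z with
    | r b => exact Or.inl ⟨⟨a, rfl⟩, ⟨b, rfl⟩⟩
    | sr b => exact (h2inj.rotation_reflection_notMem hsq hk hsd x a b hg).elim
  | sr a =>
    cases z with
    | r b =>
      exact (h2inj.map_swapTail.rotation_reflection_notMem hsq hj hsd.map_swapTail x b a
        (mem_map_of_mem _ hg)).elim
    | sr b => exact Or.inr ⟨⟨a, rfl⟩, ⟨b, rfl⟩⟩
end
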